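/- arXiv:cs/9809012 — 4 statements merged into one kernel-verified Lean document; each statement's English description precedes it below -/
import Mathlib

section
/- Let G be a multigraph on n ≥ 2 vertices with minimum cut value c ≥ 1, and let α ≥ 1 be a real number. Then the number of distinct α-minimum cuts of G is less than n^{2α}. -/
open scoped Classical

/-- A multigraph on vertex type `V` is given by an edge-index type `E` together with a map
`ends : E → Sym2 V` assigning to each edge its (unordered) pair of endpoints; the hypothesis
`∀ e, ¬ (ends e).IsDiag` says that the two endpoints of every edge are distinct.
`survGraph ends F` is the simple graph on `V` whose adjacencies are given by the edges of the
multigraph that survive when the edges in `F` fail. -/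
def survGraph {V E : Type} (ends : E → Sym2 V) (F : Finset E) : SimpleGraph V :=
  SimpleGraph.fromRel (fun x y => ∃ e, e ∉ F ∧ ends e = s(x, y))

/-- The number of connected components of the graph surviving after the edges in `F` fail. -/
noncomputable def numComponents {V E : Type} (ends : E → Sym2 V) (F : Finset E) : ℕ :=
  Nat.card (survGraph ends F).ConnectedComponent

/-- Edge `e` crosses the 2-way cut determined by the vertex set `A` (one endpoint in `A`,
one endpoint outside `A`). -/
def crosses {V E : Type} (ends : E → Sym2 V) (A : Finset V) (e : E) : Prop :=
  (∃ x ∈ ends e, x ∈ A) ∧ (∃ x ∈ ends e, x ∉ A)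

/-- The edge set of the 2-way cut determined by the vertex set `A`. -/
noncomputable def cutEdges {V E : Type} [Fintype E] (ends : E → Sym2 V) (A : Finset V) :
    Finset E :=
  Finset.univ.filter (crosses ends A)

/-- The value of the 2-way cut determined by the vertex set `A`. -/
noncomputable def cutValue {V E : Type} [Fintype E] (ends : E → Sym2 V) (A : Finset V) : ℕ :=
  (cutEdges ends A).card

/-- When each edge fails independently with probability `p`, this is the probability that the
(random) set of failed edges is a member of `S`. -/
noncomputable def failurePr {E : Type} [Fintype E] (p : ℝ) (S : Finset (Finset E)) : ℝ :=
  ∑ F ∈ S, p ^ F.card * (1 - p) ^ (Fintype.card E - F.card)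

/-!
Karger's contraction argument, made deterministic by double counting. Let `S` be the set of
sides `A` of cuts of value at most `αc`, and `m` the number of edges, so that `nc ≤ 2m`.
Summing `m - cutValue A ≥ m - αc` over `A ∈ S` counts the pairs `(A, e)` with `e` not crossing
`A`; the sides not crossed by `e = uv` are those of the multigraph with `uv` contracted, which has
`n - 1` vertices and minimum cut at least `c`. By induction on `n`, with `r = ⌈2α⌉`,
`|S| ≤ 2 (2^(r-1) - 1) ∏_{r < i ≤ n} i / (i - 2α)`, the base case `n ≤ r` counting all
`2^n - 2` proper nonempty subsets. This product is below `n^(2α)`: at the integers `2α = r - 1`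
and `2α = r` this is a bound on binomial coefficients, and in between `i - 2α` dominates, by
weighted AM-GM, the geometric interpolation of `i - (r - 1)` and `i - r`.
-/

open Finset

section Cuts

variable {V E : Type}

lemma crosses_compl [Fintype V] [DecidableEq V] (ends : E → Sym2 V) (A : Finset V) (e : E) :
    crosses ends Aᶜ e ↔ crosses ends A e := by
  simp only [crosses, mem_compl, not_not]
  exact and_comm

variable [Fintype E]

lemma cutValue_compl [Fintype V] [DecidableEq V] (ends : E → Sym2 V) (A : Finset V) :
    cutValue ends Aᶜ = cutValue ends A := by
  unfold cutValue cutEdges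
  congr 1
  ext e
  simp only [mem_filter, crosses_compl]

lemma sum_cutValue_singleton_le [Fintype V] (ends : E → Sym2 V) :
    ∑ v, cutValue ends {v} ≤ 2 * Fintype.card E := by
  have hle : ∀ e, #{v | crosses ends {v} e} ≤ 2 := fun e =>
    calc #{v | crosses ends {v} e} ≤ #(ends e).toFinset :=
          card_le_card fun v hv => by
            obtain ⟨⟨x, hx, hxv⟩, -⟩ := (mem_filter.mp hv).2
            rw [mem_singleton.mp hxv] at hx
            exact Sym2.mem_toFinset.mpr hx
      _ ≤ 2 := by rw [Sym2.card_toFinset]; split_ifs <;> norm_num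
  calc ∑ v, cutValue ends {v} = ∑ e, #{v | crosses ends {v} e} := by
        simpa [cutValue, cutEdges, bipartiteAbove, bipartiteBelow] using
          sum_card_bipartiteAbove_eq_sum_card_bipartiteBelow (s := univ) (t := univ)
            (fun v e => crosses ends {v} e)
    _ ≤ ∑ _e : E, 2 := sum_le_sum fun e _ => hle e
    _ = 2 * Fintype.card E := by rw [sum_const, card_univ, smul_eq_mul, mul_comm]

lemma card_mul_le_two_mul_card_of_le_cutValue [Fintype V] [DecidableEq V] (ends : E → Sym2 V)
    (hn : 2 ≤ Fintype.card V) {c : ℕ}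
    (hmin : ∀ A : Finset V, A.Nonempty → Aᶜ.Nonempty → c ≤ cutValue ends A) :
    Fintype.card V * c ≤ 2 * Fintype.card E := by
  have hsingle : ∀ v : V, c ≤ cutValue ends {v} := fun v =>
    hmin {v} (singleton_nonempty v) (by
      rw [← card_pos, card_compl, card_singleton]; omega)
  calc Fintype.card V * c = ∑ _v : V, c := by rw [sum_const, card_univ, smul_eq_mul]
    _ ≤ ∑ v, cutValue ends {v} := sum_le_sum fun v _ => hsingle v
    _ ≤ 2 * Fintype.card E := sum_cutValue_singleton_le ends

lemma cutValue_le_card [Fintype V] (ends : E → Sym2 V) (A : Finset V) :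
    cutValue ends A ≤ Fintype.card E :=
  card_le_univ _

lemma card_univ_filter_not_crosses [Fintype V] (ends : E → Sym2 V) (A : Finset V) :
    #{e | ¬ crosses ends A e} = Fintype.card E - cutValue ends A := by
  rw [filter_not, card_sdiff_of_subset (filter_subset _ _), card_univ]
  rfl

/-- Double counting the pairs `(A, e)` with `e` not crossing `A`. -/
lemma card_mul_sub_le_mul [Fintype V] (ends : E → Sym2 V) (S : Finset (Finset V)) {t B : ℝ}
    (hS : ∀ A ∈ S, (cutValue ends A : ℝ) ≤ t)
    (hB : ∀ e, (#{A ∈ S | ¬ crosses ends A e} : ℝ) ≤ B) :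
    #S * (Fintype.card E - t) ≤ Fintype.card E * B := by
  have hcount : ∑ A ∈ S, #{e | ¬ crosses ends A e} = ∑ e, #{A ∈ S | ¬ crosses ends A e} :=
    sum_card_bipartiteAbove_eq_sum_card_bipartiteBelow (fun A e => ¬ crosses ends A e)
  calc (#S : ℝ) * (Fintype.card E - t) = ∑ _A ∈ S, ((Fintype.card E : ℝ) - t) := by
        rw [sum_const, nsmul_eq_mul]
    _ ≤ ∑ A ∈ S, (#{e | ¬ crosses ends A e} : ℝ) := sum_le_sum fun A hA => by
        rw [card_univ_filter_not_crosses, Nat.cast_sub (cutValue_le_card ends A)]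
        linarith [hS A hA]
    _ = ∑ e, (#{A ∈ S | ¬ crosses ends A e} : ℝ) := by exact_mod_cast hcount
    _ ≤ ∑ _e : E, B := sum_le_sum fun e _ => hB e
    _ = Fintype.card E * B := by rw [sum_const, card_univ, nsmul_eq_mul]

end Cuts

section Contraction

variable {V W E : Type} [Fintype V] [DecidableEq W]

/-- Identify vertices along `f`; the edges that become loops are deleted. -/
def contractEnds (f : V → W) (ends : E → Sym2 V) :
    {e // ¬ ((ends e).map f).IsDiag} → Sym2 W :=
  fun e => (ends e.1).map f

lemma crosses_contractEnds_iff (f : V → W) (ends : E → Sym2 V) (A : Finset W)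
    (e : {e // ¬ ((ends e).map f).IsDiag}) :
    crosses (contractEnds f ends) A e ↔ crosses ends {x | f x ∈ A} e := by
  simp [crosses, contractEnds, Sym2.mem_map]

lemma not_crosses_of_isDiag_map (f : V → W) (ends : E → Sym2 V) (A : Finset W) {e : E}
    (he : ((ends e).map f).IsDiag) : ¬ crosses ends {x | f x ∈ A} e := by
  induction h : ends e using Sym2.ind with
  | _ a b =>
    rw [h, Sym2.map_mk, Sym2.mk_isDiag_iff] at he
    simp [crosses, h, he]

lemma cutValue_contractEnds [Fintype E] (f : V → W) (ends : E → Sym2 V) (A : Finset W) :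
    cutValue (contractEnds f ends) A = cutValue ends {x | f x ∈ A} := by
  refine card_bij (fun e _ => e.1) (fun e he => ?_) (fun _ _ _ _ => Subtype.ext)
    (fun e he => ?_)
  · simpa [cutEdges, crosses_contractEnds_iff] using he
  · have hnd : ¬ ((ends e).map f).IsDiag := fun hd =>
      not_crosses_of_isDiag_map f ends A hd (mem_filter.mp he).2
    exact ⟨⟨e, hnd⟩, by simpa [cutEdges, crosses_contractEnds_iff] using he, rfl⟩

end Contraction

section Surjective

variable {V W E : Type} [Fintype V] [DecidableEq W] {f : V → W}

lemma filter_mem_nonempty_iff (hf : Function.Surjective f) (A : Finset W) :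
    ({x | f x ∈ A} : Finset V).Nonempty ↔ A.Nonempty := by
  refine ⟨fun ⟨x, hx⟩ => ⟨f x, (mem_filter.mp hx).2⟩, fun ⟨y, hy⟩ => ?_⟩
  obtain ⟨x, rfl⟩ := hf y
  exact ⟨x, mem_filter.mpr ⟨mem_univ x, hy⟩⟩

lemma filter_mem_compl [DecidableEq V] [Fintype W] (f : V → W) (A : Finset W) :
    ({x | f x ∈ Aᶜ} : Finset V) = ({x | f x ∈ A} : Finset V)ᶜ := by
  ext x
  simp

lemma filter_mem_injective (hf : Function.Surjective f) :
    Function.Injective fun A : Finset W => ({x | f x ∈ A} : Finset V) := by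
  intro A B h
  ext y
  obtain ⟨x, rfl⟩ := hf y
  simpa using congrArg (x ∈ ·) h

lemma le_cutValue_contractEnds [DecidableEq V] [Fintype W] [Fintype E]
    (hf : Function.Surjective f) (ends : E → Sym2 V) {c : ℕ}
    (hmin : ∀ A : Finset V, A.Nonempty → Aᶜ.Nonempty → c ≤ cutValue ends A)
    (A : Finset W) (hA : A.Nonempty) (hAc : Aᶜ.Nonempty) :
    c ≤ cutValue (contractEnds f ends) A := by
  rw [cutValue_contractEnds]
  refine hmin _ ((filter_mem_nonempty_iff hf A).mpr hA) ?_
  rw [← filter_mem_compl f A]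
  exact (filter_mem_nonempty_iff hf _).mpr hAc

end Surjective

section CutSides

variable {V E : Type} [Fintype V] [DecidableEq V] [Fintype E]

/-- Each cut `{A, Aᶜ}` of value at most `t` appears here through both of its sides. -/
noncomputable def cutSidesLE (ends : E → Sym2 V) (t : ℝ) : Finset (Finset V) :=
  {A | A.Nonempty ∧ Aᶜ.Nonempty ∧ (cutValue ends A : ℝ) ≤ t}

lemma compl_mem_cutSidesLE {ends : E → Sym2 V} {t : ℝ} {A : Finset V}
    (hA : A ∈ cutSidesLE ends t) : Aᶜ ∈ cutSidesLE ends t := by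
  obtain ⟨hne, hcne, hle⟩ := (mem_filter.mp hA).2
  exact mem_filter.mpr ⟨mem_univ _, hcne, by rwa [compl_compl], by rwa [cutValue_compl]⟩

lemma card_cutSidesLE_add_two_le [Nonempty V] (ends : E → Sym2 V) (t : ℝ) :
    #(cutSidesLE ends t) + 2 ≤ 2 ^ Fintype.card V := by
  have hsub : cutSidesLE ends t ⊆ univ \ {∅, univ} := fun A hA => by
    obtain ⟨hne, hcne, -⟩ := (mem_filter.mp hA).2
    simp only [mem_sdiff, mem_univ, mem_insert, mem_singleton, true_and, not_or]
    exact ⟨hne.ne_empty, fun h => by simp [h] at hcne⟩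
  calc #(cutSidesLE ends t) + 2 ≤ #(univ \ {∅, univ} : Finset (Finset V)) + 2 := by
        gcongr
    _ = 2 ^ Fintype.card V := by
        rw [card_sdiff_of_subset (subset_univ _),
          card_pair (univ_nonempty (α := V)).ne_empty.symm, card_univ, Fintype.card_finset]
        have := Nat.le_self_pow (Fintype.card_ne_zero (α := V)) 2
        omega

lemma filter_mem_mem_cutSidesLE_iff {W : Type} [Fintype W] [DecidableEq W] {f : V → W}
    (hf : Function.Surjective f) (ends : E → Sym2 V) (t : ℝ) (A : Finset W) :
    ({x | f x ∈ A} : Finset V) ∈ cutSidesLE ends t ↔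
      A ∈ cutSidesLE (contractEnds f ends) t := by
  simp only [cutSidesLE, mem_filter, mem_univ, true_and, ← filter_mem_compl,
    filter_mem_nonempty_iff hf, cutValue_contractEnds]

end CutSides

section EdgeContraction

variable {V E : Type} [DecidableEq V] {u v : V}

def collapse (hne : u ≠ v) (x : V) : {y // y ≠ v} :=
  if h : x = v then ⟨u, hne⟩ else ⟨x, h⟩

lemma collapse_coe (hne : u ≠ v) (x : {y // y ≠ v}) : collapse hne x = x := by
  simp [collapse, x.2]

lemma collapse_surjective (hne : u ≠ v) : Function.Surjective (collapse hne) :=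
  fun x => ⟨x, collapse_coe hne x⟩

lemma coe_collapse_mem_iff (hne : u ≠ v) {A : Finset V} (huv : u ∈ A ↔ v ∈ A) (x : V) :
    (collapse hne x : V) ∈ A ↔ x ∈ A := by
  unfold collapse
  split_ifs with h
  · rw [h]; exact huv
  · rfl

lemma not_crosses_iff {ends : E → Sym2 V} {e : E} (he : ends e = s(u, v)) (A : Finset V) :
    ¬ crosses ends A e ↔ (u ∈ A ↔ v ∈ A) := by
  simp only [crosses, he, Sym2.mem_iff, or_and_right, exists_or, exists_eq_left]
  tauto

lemma filter_not_crosses_cutSidesLE [Fintype V] [Fintype E] (ends : E → Sym2 V) {e : E}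
    (hne : u ≠ v) (he : ends e = s(u, v)) (t : ℝ) :
    {A ∈ cutSidesLE ends t | ¬ crosses ends A e} =
      (cutSidesLE (contractEnds (collapse hne) ends) t).image
        fun A' => ({x | collapse hne x ∈ A'} : Finset V) := by
  ext A
  simp only [mem_filter, mem_image]
  constructor
  · rintro ⟨hA, hcross⟩
    set A' : Finset {y // y ≠ v} := univ.filter fun x' => (x' : V) ∈ A
    have hpull : ({x | collapse hne x ∈ A'} : Finset V) = A := by
      ext x
      simpa [A'] using coe_collapse_mem_iff hne ((not_crosses_iff he A).mp hcross) x
    refine ⟨A', ?_, hpull⟩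
    rw [← filter_mem_mem_cutSidesLE_iff (collapse_surjective hne), hpull]
    exact hA
  · rintro ⟨A', hA', rfl⟩
    refine ⟨(filter_mem_mem_cutSidesLE_iff (collapse_surjective hne) ends t A').mpr hA', ?_⟩
    refine not_crosses_of_isDiag_map _ ends A' ?_
    simp [he, Sym2.map_mk, collapse]

lemma card_filter_not_crosses_cutSidesLE [Fintype V] [Fintype E] (ends : E → Sym2 V) {e : E}
    (hne : u ≠ v) (he : ends e = s(u, v)) (t : ℝ) :
    #{A ∈ cutSidesLE ends t | ¬ crosses ends A e} =
      #(cutSidesLE (contractEnds (collapse hne) ends) t) := by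
  rw [filter_not_crosses_cutSidesLE ends hne he,
    card_image_of_injective _ (filter_mem_injective (collapse_surjective hne))]

end EdgeContraction

section Arithmetic

open Nat

lemma two_pow_pred_le_factorial : ∀ r : ℕ, 2 ^ (r - 1) ≤ r !
  | 0 => le_rfl
  | r + 1 => by
    rcases r.eq_zero_or_pos with rfl | hr
    · simp
    · calc 2 ^ r = 2 * 2 ^ (r - 1) := by rw [← pow_succ']; congr 1; omega
        _ ≤ (r + 1) * r ! := Nat.mul_le_mul (by omega) (two_pow_pred_le_factorial r)
        _ = (r + 1)! := (factorial_succ r).symm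

lemma prod_Ioc_sub_mul_factorial {k r n : ℕ} (hkr : k ≤ r) (hrn : r ≤ n) :
    (∏ i ∈ Ioc r n, ((i : ℝ) - k)) * (r - k)! = (n - k)! := by
  induction n, hrn using Nat.le_induction with
  | base => simp
  | succ n hrn ih =>
    rw [prod_Ioc_succ_top hrn, mul_right_comm, ih, show n + 1 - k = n - k + 1 by omega,
      factorial_succ]
    push_cast [Nat.cast_sub (hkr.trans hrn)]
    ring

lemma two_pow_pred_sub_one_mul_prod_lt {r n k : ℕ} (hk : r - 1 ≤ k) (hkr : k ≤ r)
    (hrn : r ≤ n) :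
    ((2 : ℝ) ^ (r - 1) - 1) * ∏ i ∈ Ioc r n, (i : ℝ) <
      n ^ k * ∏ i ∈ Ioc r n, ((i : ℝ) - k) := by
  have hD : (∏ i ∈ Ioc r n, (i : ℝ)) * r ! = n ! := by
    simpa using prod_Ioc_sub_mul_factorial (k := 0) (Nat.zero_le r) hrn
  have hP : ∏ i ∈ Ioc r n, ((i : ℝ) - k) = (n - k)! := by
    have h := prod_Ioc_sub_mul_factorial hkr hrn
    have h1 : (r - k)! = 1 := by
      rcases (show r - k = 0 ∨ r - k = 1 by omega) with h | h <;> rw [h] <;> rfl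
    rwa [h1, cast_one, mul_one] at h
  have hdesc : (n ! : ℝ) = (n - k)! * n.descFactorial k := by
    exact_mod_cast (factorial_mul_descFactorial (hkr.trans hrn)).symm
  have hK : (2 : ℝ) ^ (r - 1) - 1 < r ! := by
    have : ((2 ^ (r - 1) : ℕ) : ℝ) ≤ r ! := by exact_mod_cast two_pow_pred_le_factorial r
    push_cast at this
    linarith
  have hdesc_pos : (0 : ℝ) < n.descFactorial k := by
    exact_mod_cast descFactorial_pos.mpr (hkr.trans hrn)
  have hdesc_le : (n.descFactorial k : ℝ) ≤ n ^ k := by exact_mod_cast descFactorial_le_pow n k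
  have hfact : (0 : ℝ) < (n - k)! := by exact_mod_cast factorial_pos _
  refine lt_of_mul_lt_mul_right (a := (r ! : ℝ)) ?_ (by positivity)
  calc ((2 : ℝ) ^ (r - 1) - 1) * (∏ i ∈ Ioc r n, (i : ℝ)) * r !
      = ((2 : ℝ) ^ (r - 1) - 1) * n.descFactorial k * (n - k)! := by
        rw [mul_assoc, hD, hdesc]; ring
    _ < r ! * n ^ k * (n - k)! :=
        mul_lt_mul_of_pos_right (mul_lt_mul hK hdesc_le hdesc_pos (by positivity)) hfact
    _ = n ^ k * (∏ i ∈ Ioc r n, ((i : ℝ) - k)) * r ! := by rw [hP]; ring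

lemma prod_rpow_mul_prod_rpow_le {ι : Type*} (s : Finset ι) {a b : ι → ℝ}
    (ha : ∀ i ∈ s, 0 ≤ a i) (hb : ∀ i ∈ s, 0 ≤ b i) {t : ℝ} (ht0 : 0 ≤ t) (ht1 : t ≤ 1) :
    (∏ i ∈ s, a i) ^ (1 - t) * (∏ i ∈ s, b i) ^ t ≤ ∏ i ∈ s, ((1 - t) * a i + t * b i) := by
  rw [← Real.finsetProd_rpow s a ha, ← Real.finsetProd_rpow s b hb, ← prod_mul_distrib]
  refine prod_le_prod (fun i hi => by positivity [ha i hi, hb i hi]) fun i hi => ?_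
  exact Real.geom_mean_le_arith_mean2_weighted (by linarith) ht0 (ha i hi) (hb i hi) (by ring)

lemma lt_rpow_mul_rpow_of_le_of_lt {L X Y t : ℝ} (hL : 0 < L) (hX : L ≤ X) (hY : L < Y)
    (ht0 : 0 < t) (ht1 : t ≤ 1) : L < X ^ (1 - t) * Y ^ t :=
  calc L = L ^ (1 - t) * L ^ t := by rw [← Real.rpow_add hL]; simp
    _ < X ^ (1 - t) * Y ^ t :=
      mul_lt_mul' (Real.rpow_le_rpow hL.le hX (by linarith)) (Real.rpow_lt_rpow hL.le hY ht0)
        (by positivity) (Real.rpow_pos_of_pos (hL.trans_le hX) _)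

end Arithmetic

section Bound

/-- Karger's bound: a factor `i / (i - x)` for each contraction step from `i` vertices, down to
`r` vertices, where `2 ^ (r - 1) - 1` counts all cuts. -/
noncomputable def cutCountBound (r n : ℕ) (x : ℝ) : ℝ :=
  (2 ^ (r - 1) - 1) * ∏ i ∈ Ioc r n, ((i : ℝ) / (i - x))

lemma cutCountBound_of_le {r n : ℕ} (hnr : n ≤ r) (x : ℝ) :
    cutCountBound r n x = 2 ^ (r - 1) - 1 := by
  rw [cutCountBound, Ioc_eq_empty (by omega), prod_empty, mul_one]

lemma cutCountBound_succ {r n : ℕ} (hrn : r ≤ n) (x : ℝ) :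
    cutCountBound r (n + 1) x = cutCountBound r n x * ((n + 1) / (n + 1 - x)) := by
  rw [cutCountBound, cutCountBound, prod_Ioc_succ_top hrn, mul_assoc]
  push_cast
  ring

/-- Writing `x = (1 - t)(r - 1) + t r`, the bound interpolates log-linearly between its
values at the integers `r - 1` and `r`, where it is checked by counting. -/
theorem cutCountBound_lt_rpow {r n : ℕ} (hr : 2 ≤ r) (hn : 2 ≤ n) {x : ℝ}
    (hrx : (r : ℝ) - 1 < x) (hxr : x ≤ r) : cutCountBound r n x < (n : ℝ) ^ x := by
  have hr1 : ((r - 1 : ℕ) : ℝ) = r - 1 := by push_cast [hr.trans' one_le_two]; ring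
  rcases lt_or_ge n r with hnr | hrn
  · rw [cutCountBound_of_le hnr.le]
    calc (2 : ℝ) ^ (r - 1) - 1 < (2 : ℝ) ^ ((r - 1 : ℕ) : ℝ) := by
          rw [Real.rpow_natCast]; linarith
      _ ≤ 2 ^ x := Real.rpow_le_rpow_of_exponent_le one_le_two (by rw [hr1]; exact hrx.le)
      _ ≤ (n : ℝ) ^ x := Real.rpow_le_rpow zero_le_two (by exact_mod_cast hn) (by linarith)
  set t := x - (r - 1) with ht
  have hpos : ∀ i ∈ Ioc r n, (r : ℝ) < i := fun i hi => by exact_mod_cast (mem_Ioc.mp hi).1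
  have hlow := two_pow_pred_sub_one_mul_prod_lt (k := r - 1) le_rfl (Nat.sub_le r 1) hrn
  have hhigh := two_pow_pred_sub_one_mul_prod_lt (Nat.sub_le r 1) le_rfl hrn
  rw [hr1] at hlow
  have hamgm := prod_rpow_mul_prod_rpow_le (Ioc r n) (a := fun i => (i : ℝ) - (r - 1))
    (b := fun i => (i : ℝ) - r) (fun i hi => by linarith [hpos i hi])
    (fun i hi => by linarith [hpos i hi]) (t := t) (by linarith) (by linarith)
  have hmix : ∀ i : ℕ, (1 - t) * ((i : ℝ) - (r - 1)) + t * (i - r) = i - x := fun i => by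
    rw [ht]; ring
  simp only [hmix] at hamgm
  have hn0 : (0 : ℝ) ≤ n := Nat.cast_nonneg n
  have hnx : ((n : ℝ) ^ (r - 1)) ^ (1 - t) * ((n : ℝ) ^ r) ^ t = (n : ℝ) ^ x := by
    rw [← Real.rpow_natCast _ (r - 1), ← Real.rpow_natCast _ r, ← Real.rpow_mul hn0,
      ← Real.rpow_mul hn0, ← Real.rpow_add (by positivity), hr1]
    congr 1
    ring
  have hden : 0 < ∏ i ∈ Ioc r n, ((i : ℝ) - x) :=
    prod_pos fun i hi => by linarith [hpos i hi]
  rw [cutCountBound, prod_div_distrib, ← mul_div_assoc, div_lt_iff₀ hden]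
  calc ((2 : ℝ) ^ (r - 1) - 1) * ∏ i ∈ Ioc r n, (i : ℝ)
      < ((n : ℝ) ^ (r - 1) * ∏ i ∈ Ioc r n, ((i : ℝ) - (r - 1))) ^ (1 - t) *
          ((n : ℝ) ^ r * ∏ i ∈ Ioc r n, ((i : ℝ) - r)) ^ t := by
        refine lt_rpow_mul_rpow_of_le_of_lt ?_ hlow.le hhigh (by linarith) (by linarith)
        have : (2 : ℝ) ≤ 2 ^ (r - 1) := le_self_pow₀ one_le_two (by omega)
        exact mul_pos (by linarith) (prod_pos fun i hi => by linarith [hpos i hi])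
    _ = (n : ℝ) ^ x * ((∏ i ∈ Ioc r n, ((i : ℝ) - (r - 1))) ^ (1 - t) *
          (∏ i ∈ Ioc r n, ((i : ℝ) - r)) ^ t) := by
        rw [Real.mul_rpow (by positivity) (prod_nonneg fun i hi => by linarith [hpos i hi]),
          Real.mul_rpow (by positivity) (prod_nonneg fun i hi => by linarith [hpos i hi]),
          ← hnx]
        ring
    _ ≤ (n : ℝ) ^ x * ∏ i ∈ Ioc r n, ((i : ℝ) - x) :=
        mul_le_mul_of_nonneg_left hamgm (by positivity)

end Bound

section Counting

variable {V E : Type} [Fintype V] [DecidableEq V] [Fintype E]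

/-- Double counting gives the factor `m / (m - αc)`, with `m` edges; it is at most
`n / (n - 2α)` because `nc ≤ 2m`. -/
lemma card_cutSidesLE_le_of_forall (ends : E → Sym2 V) (hn : 2 ≤ Fintype.card V) {c : ℕ}
    (hc : 1 ≤ c) (hmin : ∀ A : Finset V, A.Nonempty → Aᶜ.Nonempty → c ≤ cutValue ends A)
    {α : ℝ} (hα : 0 ≤ α) (hαn : 2 * α < Fintype.card V) {B : ℝ}
    (hB : ∀ e, (#{A ∈ cutSidesLE ends (α * c) | ¬ crosses ends A e} : ℝ) ≤ B) :
    (#(cutSidesLE ends (α * c)) : ℝ) ≤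
      B * (Fintype.card V / (Fintype.card V - 2 * α)) := by
  have hhs : (Fintype.card V : ℝ) * c ≤ 2 * Fintype.card E := by
    exact_mod_cast card_mul_le_two_mul_card_of_le_cutValue ends hn hmin
  set n : ℝ := (Fintype.card V : ℝ)
  set m : ℝ := (Fintype.card E : ℝ)
  have hdc := card_mul_sub_le_mul ends (cutSidesLE ends (α * c))
    (fun A hA => (mem_filter.mp hA).2.2.2) hB
  have hc0 : (1 : ℝ) ≤ c := by exact_mod_cast hc
  have hgap : 0 < m - α * c := by nlinarith
  have hB0 : 0 ≤ B := by
    have : (0 : ℝ) < Fintype.card E := by nlinarith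
    rw [Nat.cast_pos] at this
    obtain ⟨e⟩ := Fintype.card_pos_iff.mp this
    exact (Nat.cast_nonneg _).trans (hB e)
  rw [← mul_div_assoc, le_div_iff₀ (by linarith)]
  refine le_of_mul_le_mul_right ?_ hgap
  calc (#(cutSidesLE ends (α * c)) : ℝ) * (n - 2 * α) * (m - α * c)
      ≤ m * B * (n - 2 * α) := by rw [mul_right_comm]; gcongr
    _ ≤ B * n * (m - α * c) := by nlinarith [mul_le_mul_of_nonneg_left hhs hα]

end Counting

theorem card_cutSidesLE_le {r : ℕ} (hr : 1 ≤ r) {α : ℝ} (hα : 0 ≤ α) (hαr : 2 * α ≤ r)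
    {c : ℕ} (hc : 1 ≤ c) (n : ℕ) :
    ∀ {V E : Type} [Fintype V] [DecidableEq V] [Fintype E] (ends : E → Sym2 V),
      (∀ e, ¬ (ends e).IsDiag) → Fintype.card V = n → 0 < n →
      (∀ A : Finset V, A.Nonempty → Aᶜ.Nonempty → c ≤ cutValue ends A) →
      (#(cutSidesLE ends (α * c)) : ℝ) ≤ 2 * cutCountBound r n (2 * α) := by
  induction n with
  | zero => intros; omega
  | succ k ih =>
    intro V E _ _ _ ends hnd hV _ hmin
    rcases le_or_gt (k + 1) r with hkr | hrk
    · have : Nonempty V := Fintype.card_pos_iff.mp (by omega)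
      have hsides : ((#(cutSidesLE ends (α * c)) + 2 : ℕ) : ℝ) ≤ (2 ^ (k + 1) : ℕ) :=
        hV ▸ Nat.cast_le.mpr (card_cutSidesLE_add_two_le ends _)
      have hpow : (2 : ℝ) ^ (k + 1) ≤ 2 ^ r := pow_le_pow_right₀ one_le_two hkr
      have hr2 : (2 : ℝ) ^ r = 2 * 2 ^ (r - 1) := by rw [← pow_succ']; congr 1; omega
      push_cast at hsides
      rw [cutCountBound_of_le hkr]
      linarith
    · rw [cutCountBound_succ (by omega), ← mul_assoc]
      have hstep := card_cutSidesLE_le_of_forall ends (by omega) hc hmin hα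
        (by rw [hV]; push_cast; linarith [show (r : ℝ) + 1 ≤ k + 1 by exact_mod_cast hrk])
        (B := 2 * cutCountBound r k (2 * α)) fun e => by
          induction h : ends e using Sym2.ind with
          | _ u v =>
            have hne : u ≠ v := by simpa [h] using hnd e
            rw [card_filter_not_crosses_cutSidesLE ends hne h]
            exact ih _ (fun e => e.2) (by simp [hV]) (by omega)
              (le_cutValue_contractEnds (collapse_surjective hne) ends hmin)
      simpa [hV] using hstep

lemma two_mul_card_image_pair_compl_le {β : Type*} [BooleanAlgebra β] [Nontrivial β]
    [DecidableEq β] (S : Finset β) (hS : ∀ A ∈ S, Aᶜ ∈ S) :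
    2 * #(S.image fun A => ({A, Aᶜ} : Finset β)) ≤ #S := by
  refine mul_card_image_le_card S 2 fun b hb => ?_
  obtain ⟨A, hA, rfl⟩ := mem_image.mp hb
  calc 2 = #({A, Aᶜ} : Finset β) := (card_pair ne_compl_self).symm
    _ ≤ _ := card_le_card fun B hB => by
      rcases mem_insert.mp hB with rfl | hB
      · simp [hA]
      · rw [mem_singleton.mp hB]
        simp [hS A hA, pair_comm]

theorem stmt0_general {V E : Type} [Fintype V] [DecidableEq V] [Fintype E]
    (ends : E → Sym2 V) (hnd : ∀ e, ¬ (ends e).IsDiag)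
    (hn : 2 ≤ Fintype.card V) (c : ℕ) (hc : 1 ≤ c)
    (hmin : ∀ A : Finset V, A.Nonempty → Aᶜ.Nonempty → c ≤ cutValue ends A)
    (α : ℝ) (hα : 1 ≤ α) :
    (((Finset.univ.filter (fun A : Finset V =>
          A.Nonempty ∧ Aᶜ.Nonempty ∧ (cutValue ends A : ℝ) ≤ α * c)).image
            (fun A => ({A, Aᶜ} : Finset (Finset V)))).card : ℝ)
      < (Fintype.card V : ℝ) ^ (2 * α) := by
  change (#((cutSidesLE ends (α * c)).image fun A => ({A, Aᶜ} : Finset (Finset V))) : ℝ) <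
    _
  have : Nonempty V := Fintype.card_pos_iff.mp (by omega)
  have hr : 2 ≤ ⌈2 * α⌉₊ := Nat.lt_ceil.mpr (by push_cast; linarith)
  have hpairs := two_mul_card_image_pair_compl_le (cutSidesLE ends (α * c))
    fun _ => compl_mem_cutSidesLE
  have hsides := card_cutSidesLE_le (by omega) (by linarith) (Nat.le_ceil (2 * α)) hc _ ends hnd
    rfl (by omega) hmin
  have hbound := cutCountBound_lt_rpow hr hn (x := 2 * α)
    (by linarith [Nat.ceil_lt_add_one (show 0 ≤ 2 * α by linarith)]) (Nat.le_ceil _)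
  rify at hpairs
  linarith

/-- A multigraph on `n ≥ 2` vertices with minimum cut value `c ≥ 1` has fewer
than `n ^ (2α)` distinct `α`-minimum cuts, for every real `α ≥ 1`.  A cut is determined by an
unordered partition `{A, Aᶜ}` of the vertices into two nonempty sets, and it is `α`-minimum if
its value is at most `α * c`. -/
theorem stmt0 {V E : Type} [Fintype V] [DecidableEq V] [Fintype E]
    (ends : E → Sym2 V) (hnd : ∀ e, ¬ (ends e).IsDiag)
    (hn : 2 ≤ Fintype.card V) (c : ℕ) (hc : 1 ≤ c)
    (hmin : ∀ A : Finset V, A.Nonempty → Aᶜ.Nonempty → c ≤ cutValue ends A)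
    (hex : ∃ A : Finset V, A.Nonempty ∧ Aᶜ.Nonempty ∧ cutValue ends A = c)
    (α : ℝ) (hα : 1 ≤ α) :
    (((Finset.univ.filter (fun A : Finset V =>
          A.Nonempty ∧ Aᶜ.Nonempty ∧ (cutValue ends A : ℝ) ≤ α * c)).image
            (fun A => ({A, Aᶜ} : Finset (Finset V)))).card : ℝ)
      < (Fintype.card V : ℝ) ^ (2 * α) :=
  stmt0_general ends hnd hn c hc hmin α hα
end

section
/- Let G be a multigraph with n vertices and m edges, and let r be an integer with 2 ≤ r ≤ n. Then G has an r-way cut of value at most 2m(r−1)/n. -/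
open scoped Classical

/-- `P` is a partition of the vertex set into `r` (pairwise disjoint) nonempty parts. -/
def IsPartitionInto {V : Type} (P : Finset (Finset V)) (r : ℕ) : Prop :=
  P.card = r ∧ (∀ A ∈ P, A.Nonempty) ∧
    (∀ A ∈ P, ∀ B ∈ P, A ≠ B → Disjoint A B) ∧ (∀ x : V, ∃ A ∈ P, x ∈ A)

/-- Edge `e` crosses the multiway cut determined by the partition `P`
(its endpoints lie in different parts). -/
def rCrosses {V E : Type} (ends : E → Sym2 V) (P : Finset (Finset V)) (e : E) : Prop :=
  ¬ ∃ A ∈ P, ∀ x ∈ ends e, x ∈ A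

/-- The edge set of the multiway cut determined by the partition `P`. -/
noncomputable def rCutEdges {V E : Type} [Fintype E] (ends : E → Sym2 V)
    (P : Finset (Finset V)) : Finset E :=
  Finset.univ.filter (rCrosses ends P)

/-- The value of the multiway cut determined by the partition `P`. -/
noncomputable def rCutValue {V E : Type} [Fintype E] (ends : E → Sym2 V)
    (P : Finset (Finset V)) : ℕ :=
  (rCutEdges ends P).card


lemma exists_subset_sum_le {V : Type} [Fintype V] (f : V → ℝ) (k : ℕ)
    (hk : k ≤ Fintype.card V) :
    ∃ S : Finset V, S.card = k ∧
      (Fintype.card V : ℝ) * ∑ v ∈ S, f v ≤ (k : ℝ) * ∑ v, f v := by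
  classical
  induction k with
  | zero => exact ⟨∅, rfl, by simp⟩
  | succ k ih =>
    obtain ⟨S, hSc, hS⟩ := ih (le_trans (Nat.le_succ k) hk)
    have hcard : (Finset.univ \ S).card = Fintype.card V - k := by
      rw [Finset.card_sdiff_of_subset (Finset.subset_univ S), Finset.card_univ, hSc]
    have hcomp : (Finset.univ \ S).Nonempty := by
      rw [← Finset.card_pos, hcard]; omega
    obtain ⟨v, hv, hvmin⟩ := Finset.exists_min_image _ f hcomp
    have h2 : ((Fintype.card V - k : ℕ) : ℝ) * f v ≤ ∑ w ∈ Finset.univ \ S, f w := by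
      rw [← hcard]
      calc ((Finset.univ \ S).card : ℝ) * f v = ∑ _w ∈ Finset.univ \ S, f v := by
              rw [Finset.sum_const, nsmul_eq_mul]
        _ ≤ ∑ w ∈ Finset.univ \ S, f w := Finset.sum_le_sum (fun w hw => hvmin w hw)
    have hvS : v ∉ S := (Finset.mem_sdiff.mp hv).2
    refine ⟨insert v S, by rw [Finset.card_insert_of_notMem hvS, hSc], ?_⟩
    rw [Finset.sum_insert hvS]
    have hsplit : ∑ w ∈ Finset.univ \ S, f w + ∑ w ∈ S, f w = ∑ w, f w :=
      Finset.sum_sdiff (Finset.subset_univ S)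
    have hcast : ((Fintype.card V - k : ℕ) : ℝ) = (Fintype.card V : ℝ) - k := by
      have : k ≤ Fintype.card V := le_trans (Nat.le_succ k) hk
      push_cast [Nat.cast_sub this]; ring
    rw [hcast] at h2
    have hnk : (1 : ℝ) ≤ (Fintype.card V : ℝ) - k := by
      have : k + 1 ≤ Fintype.card V := hk
      have := (Nat.cast_le (α := ℝ)).mpr this
      push_cast at this ⊢; linarith
    have hn0 : (0 : ℝ) ≤ (Fintype.card V : ℝ) := Nat.cast_nonneg _
    push_cast
    nlinarith [mul_le_mul_of_nonneg_left h2 hn0,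
      mul_le_mul_of_nonneg_left hS (by linarith : (0:ℝ) ≤ (Fintype.card V : ℝ) - k - 1)]

/-- A multigraph with `n` vertices and `m` edges has, for every integer `r` with
`2 ≤ r ≤ n`, an `r`-way cut of value at most `2 m (r - 1) / n`. -/
theorem stmt6 {V E : Type} [Fintype V] [DecidableEq V] [Fintype E]
    (ends : E → Sym2 V) (hnd : ∀ e, ¬ (ends e).IsDiag)
    (r : ℕ) (hr2 : 2 ≤ r) (hrn : r ≤ Fintype.card V) :
    ∃ P : Finset (Finset V), IsPartitionInto P r ∧
      (rCutValue ends P : ℝ)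
        ≤ 2 * (Fintype.card E) * ((r : ℝ) - 1) / (Fintype.card V) := by
  classical
  set n := Fintype.card V with hn_def
  have hn : 0 < n := lt_of_lt_of_le (by omega) hrn
  set deg : V → ℕ := fun v => (Finset.univ.filter (fun e => v ∈ ends e)).card with hdeg
  -- total degree = 2m
  have hsumdeg : ∑ v, deg v = 2 * Fintype.card E := by
    have : ∑ v, deg v = ∑ e : E, (Finset.univ.filter (fun v => v ∈ ends e)).card := by
      simp only [hdeg, Finset.card_filter]
      rw [Finset.sum_comm]
    rw [this]
    have hone : ∀ e : E, (Finset.univ.filter (fun v => v ∈ ends e)).card = 2 := by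
      intro e
      have hnd' := hnd e
      obtain ⟨a, b, hab⟩ : ∃ a b, ends e = s(a, b) := by
        induction ends e using Sym2.ind with
        | _ x y => exact ⟨x, y, rfl⟩
      rw [hab] at hnd' ⊢
      have hne : a ≠ b := fun h => hnd' (by simp [h])
      have : Finset.univ.filter (fun v => v ∈ s(a, b)) = {a, b} := by
        ext v; simp [Sym2.mem_iff]
      rw [this, Finset.card_insert_of_notMem (by simp [hne]), Finset.card_singleton]
    rw [Finset.sum_congr rfl (fun e _ => hone e), Finset.sum_const, Finset.card_univ,
      smul_eq_mul, mul_comm]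
  obtain ⟨S, hSc, hSsum⟩ := exists_subset_sum_le (fun v => (deg v : ℝ)) (r - 1)
    (by omega)
  set C := Finset.univ \ S with hC_def
  have hCcard : C.card = n - (r - 1) := by
    rw [hC_def, Finset.card_sdiff_of_subset (Finset.subset_univ S), Finset.card_univ, hSc]
  have hCne : C.Nonempty := by rw [← Finset.card_pos, hCcard]; omega
  set P : Finset (Finset V) := S.image (fun v => ({v} : Finset V)) ∪ {C} with hP_def
  have hCnotim : C ∉ S.image (fun v => ({v} : Finset V)) := by
    intro h
    obtain ⟨u, huS, hu⟩ := Finset.mem_image.mp h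
    have : u ∈ C := hu ▸ Finset.mem_singleton_self u
    exact (Finset.mem_sdiff.mp this).2 huS
  have hmemP : ∀ A, A ∈ P ↔ (∃ v ∈ S, A = {v}) ∨ A = C := by
    intro A
    simp only [hP_def, Finset.mem_union, Finset.mem_image, Finset.mem_singleton]
    constructor
    · rintro (⟨v, hv, rfl⟩ | h)
      · exact Or.inl ⟨v, hv, rfl⟩
      · exact Or.inr h
    · rintro (⟨v, hv, rfl⟩ | h)
      · exact Or.inl ⟨v, hv, rfl⟩
      · exact Or.inr h
  refine ⟨P, ⟨?_, ?_, ?_, ?_⟩, ?_⟩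
  · -- card
    rw [hP_def, Finset.card_union_of_disjoint (by simpa using hCnotim),
      Finset.card_image_of_injective _ (fun a b h => Finset.singleton_injective h),
      Finset.card_singleton, hSc]
    omega
  · -- nonempty
    intro A hA
    rcases (hmemP A).mp hA with ⟨v, _, rfl⟩ | rfl
    · exact Finset.singleton_nonempty v
    · exact hCne
  · -- disjoint
    intro A hA B hB hAB
    rcases (hmemP A).mp hA with ⟨v, hvS, rfl⟩ | rfl <;>
      rcases (hmemP B).mp hB with ⟨w, hwS, rfl⟩ | rfl
    · simp only [Finset.disjoint_singleton]
      exact fun h => hAB (by rw [h])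
    · rw [Finset.disjoint_singleton_left, hC_def, Finset.mem_sdiff]
      exact fun h => h.2 hvS
    · rw [Finset.disjoint_singleton_right, hC_def, Finset.mem_sdiff]
      exact fun h => h.2 hwS
    · exact absurd rfl hAB
  · -- cover
    intro x
    by_cases hx : x ∈ S
    · exact ⟨{x}, (hmemP _).mpr (Or.inl ⟨x, hx, rfl⟩), Finset.mem_singleton_self x⟩
    · exact ⟨C, (hmemP _).mpr (Or.inr rfl), Finset.mem_sdiff.mpr ⟨Finset.mem_univ x, hx⟩⟩
  · -- value bound
    have hsub : rCutEdges ends P ⊆ S.biUnion (fun v => Finset.univ.filter (fun e => v ∈ ends e)) := by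
      intro e he
      rw [rCutEdges, Finset.mem_filter] at he
      by_contra hnot
      simp only [Finset.mem_biUnion, Finset.mem_filter, Finset.mem_univ, true_and,
        not_exists, not_and] at hnot
      apply he.2
      refine ⟨C, (hmemP _).mpr (Or.inr rfl), fun x hx => ?_⟩
      exact Finset.mem_sdiff.mpr ⟨Finset.mem_univ x, fun hxS => hnot x hxS hx⟩
    have hcut : rCutValue ends P ≤ ∑ v ∈ S, deg v := by
      calc rCutValue ends P ≤ (S.biUnion (fun v => Finset.univ.filter (fun e => v ∈ ends e))).card :=
            Finset.card_le_card hsub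
        _ ≤ ∑ v ∈ S, deg v := Finset.card_biUnion_le
    have hnR : (0 : ℝ) < (n : ℝ) := by exact_mod_cast hn
    rw [le_div_iff₀ hnR]
    have h1 : (rCutValue ends P : ℝ) ≤ ∑ v ∈ S, (deg v : ℝ) := by
      push_cast; exact_mod_cast hcut
    have h2 : (n : ℝ) * ∑ v ∈ S, (deg v : ℝ) ≤ ((r : ℝ) - 1) * (2 * Fintype.card E) := by
      have := hSsum
      have hsd : (∑ v, (deg v : ℝ)) = 2 * Fintype.card E := by
        rw [← Nat.cast_sum]; exact_mod_cast congrArg (Nat.cast (R := ℝ)) hsumdeg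
      rw [hsd] at this
      have hrc : ((r - 1 : ℕ) : ℝ) = (r : ℝ) - 1 := by
        push_cast [Nat.cast_sub (by omega : 1 ≤ r)]; ring
      rw [hrc] at this
      exact this
    nlinarith [Finset.sum_nonneg (fun v (_ : v ∈ S) => Nat.cast_nonneg (α := ℝ) (deg v))]
end

section
/- Let G be a connected multigraph on n ≥ 2 vertices, let r be an integer with 2 ≤ r ≤ n, and let α ≥ 1 be a real number. Then the number of distinct α-minimum r-way cuts of G is at most (rn)^{2α(r−1)}. -/
open scoped Classical

/-!
Put `β = 2α(r - 1)` and `J = n - r + 2`. All but at most `r - 2` vertices have degree at least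
`c / (r - 1)`: otherwise cutting off `r - 1` light vertices as singletons would give an `r`-way
cut of value below `c`. Hence the graph has `m ≥ J c / (2(r - 1))` edges, and every
`α`-minimum `r`-way cut leaves at least `m (J - β) / J` edges uncut. Counting pairs
(cut, uncut edge) and contracting the edge, which keeps the cut and does not lower `c`, the
number `N(n)` of `α`-minimum `r`-way cuts satisfies `N(n) ≤ N(n - 1) · J / (J - β)`.
Starting from the trivial bound `r ^ n` at `J = b := ⌊β⌋ + 1`, Bernoulli's inequality gives
`J / (J - β) ≤ (J / (J - b)) ^ (β / b)`, so the product telescopes to `choose J b ^ (β / b)`,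
which is at most `J ^ β / (b !) ^ (β / b)`; the factor `b !` absorbs the surplus powers of `r`.
-/

open Finset

section Partitions

variable {V : Type} {P : Finset (Finset V)} {r : ℕ}

theorem IsPartitionInto.eq_of_mem_of_mem (hP : IsPartitionInto P r) {A B : Finset V}
    (hA : A ∈ P) (hB : B ∈ P) {v : V} (hvA : v ∈ A) (hvB : v ∈ B) : A = B := by
  by_contra hAB
  exact disjoint_left.1 (hP.2.2.1 A hA B hB hAB) hvA hvB

variable [Fintype V]

theorem IsPartitionInto.exists_eq_image_fibers (hP : IsPartitionInto P r) :
    ∃ f : V → Fin r, P = univ.image fun i => ({v | f v = i} : Finset V) := by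
  let e : P ≃ Fin r := Fintype.equivFinOfCardEq (by rw [Fintype.card_coe, hP.1])
  choose part hpart hmem using hP.2.2.2
  have hfiber : ∀ A (hA : A ∈ P), ({v | e ⟨part v, hpart v⟩ = e ⟨A, hA⟩} : Finset V) = A := by
    intro A hA
    ext v
    simp only [mem_filter, mem_univ, true_and, e.apply_eq_iff_eq, Subtype.mk.injEq]
    exact ⟨fun h => h ▸ hmem v, fun hv => hP.eq_of_mem_of_mem (hpart v) hA (hmem v) hv⟩
  refine ⟨fun v => e ⟨part v, hpart v⟩, Finset.ext fun A => ⟨fun hA => ?_, ?_⟩⟩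
  · exact mem_image.2 ⟨e ⟨A, hA⟩, mem_univ _, hfiber A hA⟩
  · intro hA'
    obtain ⟨i, -, rfl⟩ := mem_image.1 hA'
    obtain ⟨⟨A, hA⟩, rfl⟩ := e.surjective i
    rwa [hfiber A hA]

theorem card_filter_isPartitionInto_le (r : ℕ) :
    #{P : Finset (Finset V) | IsPartitionInto P r} ≤ r ^ Fintype.card V := by
  calc #{P : Finset (Finset V) | IsPartitionInto P r}
      ≤ #((univ : Finset (V → Fin r)).image
          fun f => univ.image fun i => ({v | f v = i} : Finset V)) := by
        refine card_le_card fun P hP => ?_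
        obtain ⟨f, hf⟩ := (mem_filter.1 hP).2.exists_eq_image_fibers
        exact mem_image.2 ⟨f, mem_univ _, hf.symm⟩
    _ ≤ r ^ Fintype.card V := card_image_le.trans (by simp)

end Partitions

section Degrees

variable {V E : Type} [Fintype V] [DecidableEq V] [Fintype E] (ends : E → Sym2 V)

noncomputable def vertexDegree (v : V) : ℕ :=
  #{e | v ∈ ends e}

theorem sum_vertexDegree (hnd : ∀ e, ¬ (ends e).IsDiag) :
    ∑ v, vertexDegree ends v = 2 * Fintype.card E := by
  have hcount := sum_card_bipartiteAbove_eq_sum_card_bipartiteBelow (s := (univ : Finset V))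
    (t := (univ : Finset E)) (fun v e => v ∈ ends e)
  have hends : ∀ e, #{v | v ∈ ends e} = 2 := fun e => by
    rw [← Sym2.card_toFinset_of_not_isDiag _ (hnd e)]
    congr 1
    ext v
    simp
  simp only [bipartiteAbove, bipartiteBelow, hends] at hcount
  simp [vertexDegree, hcount, mul_comm]

theorem isPartitionInto_insert_compl_singletons {S : Finset V} (hS : #S < Fintype.card V) :
    IsPartitionInto (insert (univ \ S) (S.image singleton)) (#S + 1) := by
  have hcompl : (univ \ S).Nonempty := by
    rw [← card_pos, card_sdiff_of_subset (subset_univ S), card_univ]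
    omega
  have hnotmem : univ \ S ∉ S.image singleton := by
    simp only [mem_image, not_exists, not_and]
    intro v hv hvS
    have hvS' : v ∈ univ \ S := hvS ▸ mem_singleton_self v
    simp [hv] at hvS'
  refine ⟨?_, ?_, ?_, fun v => ?_⟩
  · rw [card_insert_of_notMem hnotmem, card_image_of_injective _ singleton_injective]
  · simpa using hcompl
  · simp only [mem_insert, mem_image]
    rintro A (rfl | ⟨u, hu, rfl⟩) B (rfl | ⟨w, hw, rfl⟩) hAB
    · exact absurd rfl hAB
    · simpa using hw
    · simpa using hu
    · simpa [eq_comm] using hAB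
  · by_cases hv : v ∈ S
    · exact ⟨{v}, mem_insert_of_mem (mem_image_of_mem _ hv), mem_singleton_self v⟩
    · exact ⟨univ \ S, mem_insert_self _ _, by simpa using hv⟩

theorem rCutValue_insert_compl_singletons_le (S : Finset V) :
    rCutValue ends (insert (univ \ S) (S.image singleton)) ≤ ∑ v ∈ S, vertexDegree ends v := by
  have hsub : rCutEdges ends (insert (univ \ S) (S.image singleton)) ⊆
      S.biUnion fun v => {e | v ∈ ends e} := by
    intro e he
    by_contra hnot
    refine (mem_filter.1 he).2 ⟨univ \ S, mem_insert_self _ _, fun x hx => ?_⟩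
    simp only [mem_biUnion, mem_filter, mem_univ, true_and, not_exists, not_and] at hnot
    simpa using fun hxS => hnot x hxS hx
  exact (card_le_card hsub).trans card_biUnion_le

theorem mul_le_two_mul_card_mul_of_le_rCutValue (hnd : ∀ e, ¬ (ends e).IsDiag) {r c : ℕ}
    (hr : 2 ≤ r) (hrn : r ≤ Fintype.card V)
    (hmin : ∀ P, IsPartitionInto P r → c ≤ rCutValue ends P) :
    (Fintype.card V - r + 2) * c ≤ 2 * Fintype.card E * (r - 1) := by
  set T : Finset V := {v | (r - 1) * vertexDegree ends v < c}
  have hT : #T ≤ r - 2 := by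
    by_contra! hT
    obtain ⟨S, hST, hS⟩ := exists_subset_card_eq (show r - 1 ≤ #T by omega)
    have hpart := isPartitionInto_insert_compl_singletons (S := S) (by omega)
    rw [hS, Nat.sub_add_cancel (by omega)] at hpart
    have hcut := (hmin _ hpart).trans (rCutValue_insert_compl_singletons_le ends S)
    have hlt : ∑ v ∈ S, (r - 1) * vertexDegree ends v < ∑ _v ∈ S, c :=
      sum_lt_sum_of_nonempty (card_pos.1 (by omega)) fun v hv => (mem_filter.1 (hST hv)).2
    rw [← mul_sum, sum_const, hS, smul_eq_mul] at hlt
    exact absurd (Nat.mul_le_mul_left (r - 1) hcut) (not_le.2 hlt)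
  have hTc : Fintype.card V - r + 2 ≤ #(univ \ T) := by
    rw [card_sdiff_of_subset (subset_univ T), card_univ]
    omega
  calc (Fintype.card V - r + 2) * c ≤ ∑ _v ∈ univ \ T, c := by
        rw [sum_const, smul_eq_mul]
        exact Nat.mul_le_mul_right c hTc
    _ ≤ ∑ v ∈ univ \ T, (r - 1) * vertexDegree ends v :=
        sum_le_sum fun v hv => by simpa [T] using hv
    _ ≤ ∑ v, (r - 1) * vertexDegree ends v := sum_le_sum_of_subset (subset_univ _)
    _ = 2 * Fintype.card E * (r - 1) := by rw [← mul_sum, sum_vertexDegree ends hnd, mul_comm]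

end Degrees

theorem rCutValue_pos {V E : Type} [Fintype E] {ends : E → Sym2 V}
    (hconn : (survGraph ends ∅).Connected) {P : Finset (Finset V)} {r : ℕ} (hr : 2 ≤ r)
    (hP : IsPartitionInto P r) : 0 < rCutValue ends P := by
  by_contra! h0
  have hnot : ∀ e, ¬ rCrosses ends P e := by
    simpa [rCutValue, rCutEdges, filter_eq_empty_iff] using h0
  obtain ⟨A, hA, B, hB, hAB⟩ := one_lt_card.1 (hP.1 ▸ hr : 1 < #P)
  obtain ⟨a, ha⟩ := hP.2.1 A hA
  obtain ⟨b, hb⟩ := hP.2.1 B hB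
  have hclosed : ∀ u v, (survGraph ends ∅).Adj u v → u ∈ A → v ∈ A := by
    intro u v huv hu
    obtain ⟨e, -, he⟩ : ∃ e, e ∉ (∅ : Finset E) ∧ (ends e = s(u, v) ∨ ends e = s(v, u)) := by
      simpa [survGraph, exists_or] using huv.2
    obtain ⟨C, hC, hsub⟩ := not_not.1 (hnot e)
    have huC : u ∈ C := hsub u (by rcases he with he | he <;> simp [he])
    have hvC : v ∈ C := hsub v (by rcases he with he | he <;> simp [he])
    exact hP.eq_of_mem_of_mem hC hA huC hu ▸ hvC
  have hreach : ∀ v, Relation.ReflTransGen (survGraph ends ∅).Adj a v → v ∈ A := by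
    intro v hav
    induction hav with
    | refl => exact ha
    | tail _ hadj ih => exact hclosed _ _ hadj ih
  have hbA := hreach b ((SimpleGraph.reachable_iff_reflTransGen a b).1 (hconn.preconnected a b))
  exact hAB (hP.eq_of_mem_of_mem hA hB hbA hb)

noncomputable def rCutsAtMost {V E : Type} [Fintype V] [Fintype E] (ends : E → Sym2 V) (r : ℕ)
    (a : ℝ) : Finset (Finset (Finset V)) :=
  {P | IsPartitionInto P r ∧ (rCutValue ends P : ℝ) ≤ a}

theorem card_rCutsAtMost_le_pow {V E : Type} [Fintype V] [Fintype E] (ends : E → Sym2 V)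
    (r : ℕ) (a : ℝ) : #(rCutsAtMost ends r a) ≤ r ^ Fintype.card V :=
  (card_le_card fun _ hP => mem_filter.2 ⟨mem_univ _, (mem_filter.1 hP).2.1⟩).trans
    (card_filter_isPartitionInto_le r)

section Contraction

variable {V W E : Type} [Fintype V] [DecidableEq W] (ends : E → Sym2 V) (f : V → W)

noncomputable def pullPartition (Q : Finset (Finset W)) : Finset (Finset V) :=
  Q.image fun B => ({v | f v ∈ B} : Finset V)

/-- Contraction along `f`: the edges joining two identified vertices are deleted. -/
def mapEnds : {e : E // ¬ ((ends e).map f).IsDiag} → Sym2 W :=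
  fun e => (ends e.1).map f

variable {f}

theorem injective_filter_mem (hf : Function.Surjective f) :
    Function.Injective fun B : Finset W => ({v | f v ∈ B} : Finset V) := by
  intro B B' h
  ext w
  obtain ⟨v, rfl⟩ := hf w
  simpa using congrArg (v ∈ ·) h

theorem isPartitionInto_pullPartition_iff (hf : Function.Surjective f) {Q : Finset (Finset W)}
    {r : ℕ} : IsPartitionInto (pullPartition f Q) r ↔ IsPartitionInto Q r := by
  have hinj := injective_filter_mem (V := V) hf
  have hne : ∀ B : Finset W, ({v | f v ∈ B} : Finset V).Nonempty ↔ B.Nonempty := by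
    simp [Finset.Nonempty, hf.exists]
  have hdisj : ∀ B B' : Finset W,
      Disjoint ({v | f v ∈ B} : Finset V) ({v | f v ∈ B'} : Finset V) ↔ Disjoint B B' := by
    simp [disjoint_left, hf.forall]
  simp only [IsPartitionInto, pullPartition, card_image_of_injective _ hinj, forall_mem_image,
    exists_mem_image, hne, hdisj, hinj.ne_iff, mem_filter, mem_univ, true_and, hf.forall]

theorem rCrosses_pullPartition_iff {Q : Finset (Finset W)}
    (e : {e : E // ¬ ((ends e).map f).IsDiag}) :
    rCrosses ends (pullPartition f Q) e.1 ↔ rCrosses (mapEnds ends f) Q e := by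
  simp [rCrosses, pullPartition, mapEnds, Sym2.mem_map]

theorem not_rCrosses_pullPartition {Q : Finset (Finset W)} (hQ : ∀ w, ∃ B ∈ Q, w ∈ B) {e : E}
    (he : ((ends e).map f).IsDiag) : ¬ rCrosses ends (pullPartition f Q) e := by
  rw [rCrosses, not_not]
  generalize ends e = z at he ⊢
  induction z using Sym2.ind with
  | h u v =>
    obtain ⟨B, hB, hu⟩ := hQ (f u)
    rw [Sym2.map_mk, Sym2.mk_isDiag_iff] at he
    exact ⟨_, mem_image_of_mem _ hB, by simp [hu, ← he]⟩

theorem rCutValue_pullPartition [Fintype E] {Q : Finset (Finset W)}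
    (hQ : ∀ w, ∃ B ∈ Q, w ∈ B) :
    rCutValue ends (pullPartition f Q) = rCutValue (mapEnds ends f) Q := by
  have hedges : rCutEdges ends (pullPartition f Q) =
      (rCutEdges (mapEnds ends f) Q).map (Function.Embedding.subtype _) := by
    ext e
    simp only [rCutEdges, mem_filter, mem_univ, true_and, mem_map,
      Function.Embedding.subtype_apply]
    constructor
    · intro he
      have hnd : ¬ ((ends e).map f).IsDiag := fun hd => not_rCrosses_pullPartition ends hQ hd he
      exact ⟨⟨e, hnd⟩, (rCrosses_pullPartition_iff ends ⟨e, hnd⟩).1 he, rfl⟩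
    · rintro ⟨e', he', rfl⟩
      exact (rCrosses_pullPartition_iff ends e').2 he'
  rw [rCutValue, hedges, card_map, rCutValue]

theorem pullPartition_image_image {P : Finset (Finset V)}
    (hP : ∀ A ∈ P, ∀ u v, f u = f v → u ∈ A → v ∈ A) :
    pullPartition f (P.image (image f)) = P := by
  rw [pullPartition, image_image]
  conv_rhs => rw [← image_id (s := P)]
  refine image_congr fun A hA => ?_
  ext v
  simpa using ⟨fun ⟨u, hu, huv⟩ => hP A hA u v huv hu, fun hv => ⟨v, hv, rfl⟩⟩

variable [Fintype E] {r c : ℕ}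

theorem le_rCutValue_mapEnds (hf : Function.Surjective f)
    (hmin : ∀ P, IsPartitionInto P r → c ≤ rCutValue ends P) (Q : Finset (Finset W))
    (hQ : IsPartitionInto Q r) : c ≤ rCutValue (mapEnds ends f) Q := by
  rw [← rCutValue_pullPartition ends hQ.2.2.2]
  exact hmin _ ((isPartitionInto_pullPartition_iff hf).2 hQ)

theorem card_le_card_rCutsAtMost_mapEnds [Fintype W] (hf : Function.Surjective f) {a : ℝ}
    {s : Finset (Finset (Finset V))} (hs : s ⊆ rCutsAtMost ends r a)
    (hsat : ∀ P ∈ s, ∀ A ∈ P, ∀ u v, f u = f v → u ∈ A → v ∈ A) :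
    #s ≤ #(rCutsAtMost (mapEnds ends f) r a) := by
  refine (card_le_card fun P hPs => ?_).trans (card_image_le (f := pullPartition f))
  have hP := mem_filter.1 (hs hPs)
  have hpull := pullPartition_image_image (hsat P hPs)
  have hQ : IsPartitionInto (P.image (image f)) r :=
    (isPartitionInto_pullPartition_iff hf).1 (by rw [hpull]; exact hP.2.1)
  refine mem_image.2 ⟨P.image (image f), mem_filter.2 ⟨mem_univ _, hQ, ?_⟩, hpull⟩
  rw [← rCutValue_pullPartition ends hQ.2.2.2, hpull]
  exact hP.2.2

end Contraction

section EdgeContraction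

variable {V : Type} [DecidableEq V] {x y : V}

def mergeVertex (hxy : x ≠ y) (v : V) : {v : V // v ≠ y} :=
  if h : v = y then ⟨x, hxy⟩ else ⟨v, h⟩

theorem mergeVertex_surjective (hxy : x ≠ y) : Function.Surjective (mergeVertex hxy) :=
  fun w => ⟨w.1, dif_neg w.2⟩

theorem mem_of_mergeVertex_eq {hxy : x ≠ y} {A : Finset V} (hA : x ∈ A ↔ y ∈ A) {u v : V}
    (h : mergeVertex hxy u = mergeVertex hxy v) (hu : u ∈ A) : v ∈ A := by
  unfold mergeVertex at h
  split_ifs at h with hu' hv' <;> simp_all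

theorem card_filter_not_rCrosses_le [Fintype V] {E : Type} [Fintype E] (ends : E → Sym2 V)
    (hxy : x ≠ y) {e : E} (he : ends e = s(x, y)) (r : ℕ) (a : ℝ) :
    #{P ∈ rCutsAtMost ends r a | ¬ rCrosses ends P e} ≤
      #(rCutsAtMost (mapEnds ends (mergeVertex hxy)) r a) := by
  apply card_le_card_rCutsAtMost_mapEnds ends (mergeVertex_surjective hxy) (filter_subset _ _)
  intro P hP A hA u v huv hu
  refine mem_of_mergeVertex_eq ?_ huv hu
  obtain ⟨hP, hnot⟩ := mem_filter.1 hP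
  obtain ⟨A₀, hA₀, hxyA₀⟩ := not_not.1 hnot
  rw [he] at hxyA₀
  have hPart := (mem_filter.1 hP).2.1
  exact ⟨fun hx => hPart.eq_of_mem_of_mem hA₀ hA (hxyA₀ x (by simp)) hx ▸ hxyA₀ y (by simp),
    fun hy => hPart.eq_of_mem_of_mem hA₀ hA (hxyA₀ y (by simp)) hy ▸ hxyA₀ x (by simp)⟩

theorem card_subtype_ne [Fintype V] (y : V) :
    Fintype.card {v : V // v ≠ y} = Fintype.card V - 1 := by
  rw [Fintype.card_subtype_compl, Fintype.card_subtype_eq]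

end EdgeContraction

theorem card_rCutsAtMost_le_mul_div {V E : Type} [Fintype V] [DecidableEq V] [Fintype E]
    (ends : E → Sym2 V) (hnd : ∀ e, ¬ (ends e).IsDiag) {r c : ℕ} {β a N : ℝ} (hr : 2 ≤ r)
    (hc : 0 < c) (hrn : r ≤ Fintype.card V) (hβ₀ : 0 ≤ β)
    (hβ : β < (Fintype.card V - r + 2 : ℕ)) (ha : 2 * ((r : ℝ) - 1) * a ≤ β * c)
    (hmin : ∀ P, IsPartitionInto P r → c ≤ rCutValue ends P)
    (hN : ∀ e, (#{P ∈ rCutsAtMost ends r a | ¬ rCrosses ends P e} : ℝ) ≤ N) :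
    (#(rCutsAtMost ends r a) : ℝ) ≤
      N * ((Fintype.card V - r + 2 : ℕ) / ((Fintype.card V - r + 2 : ℕ) - β)) := by
  set J : ℕ := Fintype.card V - r + 2
  set m := Fintype.card E
  set cuts := rCutsAtMost ends r a
  have hr1 : (1 : ℝ) ≤ r - 1 := by
    have : (2 : ℝ) ≤ r := by exact_mod_cast hr
    linarith
  have hJ : (0 : ℝ) < J := by positivity
  have hJβ : (0 : ℝ) < J - β := sub_pos.2 hβ
  have hedge : (J : ℝ) * c ≤ 2 * m * ((r : ℝ) - 1) := by
    have := mul_le_two_mul_card_mul_of_le_rCutValue ends hnd hr hrn hmin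
    have hcast : ((J * c : ℕ) : ℝ) ≤ ((2 * m * (r - 1) : ℕ) : ℝ) := by exact_mod_cast this
    push_cast [Nat.cast_sub (by omega : 1 ≤ r)] at hcast
    exact hcast
  have hc' : (1 : ℝ) ≤ c := by exact_mod_cast hc
  have hm : (0 : ℝ) < m := by nlinarith
  have haJ : a * J ≤ β * m := by nlinarith
  have hspare : ∀ P ∈ cuts, (m : ℝ) * (J - β) / J ≤ #{e | ¬ rCrosses ends P e} := by
    intro P hP
    have hsplit : (rCutValue ends P : ℝ) + #{e | ¬ rCrosses ends P e} = m := by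
      exact_mod_cast card_filter_add_card_filter_not (s := univ) (rCrosses ends P)
    have hval := (mem_filter.1 hP).2.2
    rw [div_le_iff₀ hJ]
    nlinarith
  have hdouble : ∑ P ∈ cuts, (#{e | ¬ rCrosses ends P e} : ℝ) =
      ∑ e, (#{P ∈ cuts | ¬ rCrosses ends P e} : ℝ) := by
    exact_mod_cast sum_card_bipartiteAbove_eq_sum_card_bipartiteBelow (s := cuts) (t := univ)
      fun P e => ¬ rCrosses ends P e
  have hsum : #cuts * ((m : ℝ) * (J - β) / J) ≤ m * N := calc
    #cuts * ((m : ℝ) * (J - β) / J) = ∑ _P ∈ cuts, (m : ℝ) * (J - β) / J := by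
      rw [sum_const, nsmul_eq_mul]
    _ ≤ ∑ P ∈ cuts, (#{e | ¬ rCrosses ends P e} : ℝ) := sum_le_sum hspare
    _ = ∑ e, (#{P ∈ cuts | ¬ rCrosses ends P e} : ℝ) := hdouble
    _ ≤ ∑ _e : E, N := sum_le_sum fun e _ => hN e
    _ = m * N := by rw [sum_const, card_univ, nsmul_eq_mul]
  rw [mul_div_assoc', le_div_iff₀ hJβ]
  rw [mul_div_assoc', div_le_iff₀ hJ] at hsum
  exact le_of_mul_le_mul_left (by linarith) hm

theorem card_rCutsAtMost_le_pow_mul_prod {r c b : ℕ} {β a : ℝ} (hr : 2 ≤ r) (hb : 2 ≤ b)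
    (hc : 0 < c) (hβ₀ : 0 ≤ β) (hβb : β < b + 1) (ha : 2 * ((r : ℝ) - 1) * a ≤ β * c)
    (n : ℕ) (hn : r + b - 2 ≤ n) {V E : Type} [Fintype V] [DecidableEq V] [Fintype E]
    (ends : E → Sym2 V) (hnd : ∀ e, ¬ (ends e).IsDiag) (hV : Fintype.card V = n)
    (hmin : ∀ P, IsPartitionInto P r → c ≤ rCutValue ends P) :
    (#(rCutsAtMost ends r a) : ℝ) ≤
      (r : ℝ) ^ (r + b - 2) * ∏ j ∈ Ioc b (n - r + 2), (j : ℝ) / (j - β) := by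
  induction n, hn using Nat.le_induction generalizing V E with
  | base =>
    rw [show r + b - 2 - r + 2 = b by omega, Ioc_self, prod_empty, mul_one, ← hV]
    exact_mod_cast card_rCutsAtMost_le_pow ends r a
  | succ n hn ih =>
    rw [show n + 1 - r + 2 = n - r + 2 + 1 by omega, prod_Ioc_succ_top (by omega), ← mul_assoc]
    have hJ : n - r + 2 + 1 = Fintype.card V - r + 2 := by omega
    rw [hJ]
    refine card_rCutsAtMost_le_mul_div ends hnd hr hc (by omega) hβ₀ ?_ ha hmin fun e => ?_
    · exact hβb.trans_le (by exact_mod_cast (by omega : b + 1 ≤ Fintype.card V - r + 2))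
    obtain ⟨x, y, he⟩ : ∃ x y, ends e = s(x, y) := ⟨_, _, (Quot.out_eq (ends e)).symm⟩
    have hxy : x ≠ y := fun h => hnd e (by rw [he, h, Sym2.mk_isDiag_iff])
    calc (#{P ∈ rCutsAtMost ends r a | ¬ rCrosses ends P e} : ℝ)
        ≤ #(rCutsAtMost (mapEnds ends (mergeVertex hxy)) r a) := by
          exact_mod_cast card_filter_not_rCrosses_le ends hxy he r a
      _ ≤ _ := ih _ (fun e' => e'.2) (by rw [card_subtype_ne, hV, Nat.add_sub_cancel])
          (le_rCutValue_mapEnds ends (mergeVertex_surjective hxy) hmin)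

section Estimates

open Nat Real

theorem div_sub_le_rpow_div_sub {j b β : ℝ} (hb : 0 < b) (hbj : b < j) (hβ₀ : 0 ≤ β)
    (hβb : β ≤ b) : j / (j - β) ≤ (j / (j - b)) ^ (β / b) := by
  have hj : 0 < j := hb.trans hbj
  have hjb : 0 < (j - b) / j := div_pos (sub_pos.2 hbj) hj
  -- Bernoulli's inequality for the exponent `β / b ≤ 1`.
  have hbern : ((j - b) / j) ^ (β / b) ≤ (j - β) / j := by
    have hs : -1 ≤ -(b / j) := neg_le_neg ((div_le_one hj).2 hbj.le)
    have h := rpow_one_add_le_one_add_mul_self hs (div_nonneg hβ₀ hb.le) ((div_le_one hb).2 hβb)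
    rwa [← sub_eq_add_neg, one_sub_div hj.ne', mul_neg, div_mul_div_cancel₀ hb.ne',
      ← sub_eq_add_neg, one_sub_div hj.ne'] at h
  calc j / (j - β) = ((j - β) / j)⁻¹ := (inv_div _ _).symm
    _ ≤ (((j - b) / j) ^ (β / b))⁻¹ := inv_anti₀ (rpow_pos_of_pos hjb _) hbern
    _ = (j / (j - b)) ^ (β / b) := by rw [← inv_rpow hjb.le, inv_div]

theorem prod_Ioc_div_sub_eq_choose {b J : ℕ} (hbJ : b ≤ J) :
    ∏ j ∈ Ioc b J, (j : ℝ) / (j - b) = J.choose b := by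
  induction J, hbJ using Nat.le_induction with
  | base => simp
  | succ J hbJ ih =>
    rw [prod_Ioc_succ_top hbJ, ih]
    have hpos : (0 : ℝ) < J + 1 - b := by
      have : (b : ℝ) ≤ J := by exact_mod_cast hbJ
      linarith
    have hkey : (J.choose b : ℝ) * (J + 1) = (J + 1).choose b * (J + 1 - b) := by
      have h := congrArg (Nat.cast (R := ℝ)) (Nat.choose_mul_succ_eq J b)
      push_cast [Nat.cast_sub (by omega : b ≤ J + 1)] at h
      exact h
    push_cast
    field_simp
    linarith

theorem prod_Ioc_div_sub_le {b J : ℕ} {β : ℝ} (hb : 0 < b) (hβ₀ : 0 ≤ β) (hβb : β ≤ b)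
    (hbJ : b ≤ J) : ∏ j ∈ Ioc b J, (j : ℝ) / (j - β) ≤ (J : ℝ) ^ β / (b ! : ℝ) ^ (β / b) := by
  have hb' : (0 : ℝ) < b := by exact_mod_cast hb
  have hgt : ∀ j ∈ Ioc b J, (b : ℝ) < j := fun j hj => by exact_mod_cast (mem_Ioc.1 hj).1
  calc ∏ j ∈ Ioc b J, (j : ℝ) / (j - β)
      ≤ ∏ j ∈ Ioc b J, ((j : ℝ) / (j - b)) ^ (β / b) := by
        refine prod_le_prod (fun j hj => ?_) fun j hj =>
          div_sub_le_rpow_div_sub hb' (hgt j hj) hβ₀ hβb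
        have := hgt j hj
        exact div_nonneg (by linarith) (by linarith)
    _ = (J.choose b : ℝ) ^ (β / b) := by
        rw [finsetProd_rpow _ _ fun j hj => div_nonneg (by linarith [hgt j hj])
          (by linarith [hgt j hj]), prod_Ioc_div_sub_eq_choose hbJ]
    _ ≤ ((J : ℝ) ^ b / b !) ^ (β / b) :=
        rpow_le_rpow (by positivity) (choose_le_pow_div b J) (by positivity)
    _ = (J : ℝ) ^ β / (b ! : ℝ) ^ (β / b) := by
        rw [div_rpow (by positivity) (by positivity), ← rpow_natCast, ← rpow_mul (by positivity),
          mul_div_cancel₀ _ hb'.ne']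

theorem factorial_pred_le_rpow {b : ℕ} (hb : 0 < b) {t : ℝ} (ht : ((b : ℝ) - 1) / b ≤ t) :
    ((b - 1)! : ℝ) ≤ (b ! : ℝ) ^ t := by
  have hb' : (0 : ℝ) < b := by exact_mod_cast hb
  have hfac : (1 : ℝ) ≤ b ! := by exact_mod_cast (b !).one_le_iff_ne_zero.2 (factorial_ne_zero b)
  have hroot : (b ! : ℝ) ^ (1 / (b : ℝ)) ≤ b :=
    calc (b ! : ℝ) ^ (1 / (b : ℝ)) ≤ ((b : ℝ) ^ b) ^ (1 / (b : ℝ)) :=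
          rpow_le_rpow (by positivity) (by exact_mod_cast factorial_le_pow b) (by positivity)
      _ = b := by rw [← rpow_natCast, ← rpow_mul hb'.le, mul_one_div_cancel hb'.ne', rpow_one]
  calc ((b - 1)! : ℝ) = b ! / b := by
        rw [← mul_factorial_pred hb.ne', Nat.cast_mul, mul_div_cancel_left₀ _ hb'.ne']
    _ ≤ b ! / (b ! : ℝ) ^ (1 / (b : ℝ)) :=
        div_le_div_of_nonneg_left (by positivity) (by positivity) hroot
    _ = (b ! : ℝ) ^ (((b : ℝ) - 1) / b) := by
        rw [sub_div, div_self hb'.ne', rpow_sub (by positivity), rpow_one]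
    _ ≤ (b ! : ℝ) ^ t := rpow_le_rpow_of_exponent_le hfac ht

theorem pow_pred_le_factorial {r : ℕ} (hr : 0 < r) : r ^ (r - 1) ≤ (2 * r - 2)! := by
  have h := factorial_mul_pow_le_factorial (m := r - 1) (n := r - 1)
  rw [Nat.sub_add_cancel hr, show r - 1 + (r - 1) = 2 * r - 2 by omega] at h
  exact (le_mul_of_one_le_left (Nat.zero_le _) (factorial_pos _)).trans h

theorem pow_mul_prod_Ioc_le_mul_rpow {r b n : ℕ} {β : ℝ} (hr : 2 ≤ r)
    (h2r : 2 * ((r : ℝ) - 1) ≤ β) (hbβ : (b : ℝ) - 1 ≤ β) (hβb : β < b) (hn : r + b - 2 ≤ n) :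
    (r : ℝ) ^ (r + b - 2) * ∏ j ∈ Ioc b (n - r + 2), (j : ℝ) / (j - β) ≤
      ((r * n : ℕ) : ℝ) ^ β := by
  have hr' : (2 : ℝ) ≤ r := by exact_mod_cast hr
  have hb : 0 < b := by exact_mod_cast (by linarith : (0 : ℝ) < b)
  have h2rb : 2 * r - 2 ≤ b - 1 := by
    have : ((2 * r - 2 : ℕ) : ℝ) < b := by
      push_cast [Nat.cast_sub (by omega : 2 ≤ 2 * r)]
      linarith
    have : 2 * r - 2 < b := by exact_mod_cast this
    omega
  have hrpow : (r : ℝ) ^ (r + b - 2) ≤ r ^ β * (b ! : ℝ) ^ (β / b) := by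
    rw [show r + b - 2 = (b - 1) + (r - 1) by omega, pow_add]
    refine mul_le_mul ?_ ?_ (by positivity) (by positivity)
    · rw [← rpow_natCast]
      exact rpow_le_rpow_of_exponent_le (by linarith) (by push_cast [Nat.cast_sub hb]; linarith)
    · calc (r : ℝ) ^ (r - 1) ≤ ((2 * r - 2)! : ℝ) := by
            exact_mod_cast pow_pred_le_factorial (by omega)
        _ ≤ ((b - 1)! : ℝ) := by exact_mod_cast factorial_le h2rb
        _ ≤ (b ! : ℝ) ^ (β / b) :=
          factorial_pred_le_rpow hb (div_le_div_of_nonneg_right hbβ (cast_nonneg _))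
  have hprod : 0 ≤ ∏ j ∈ Ioc b (n - r + 2), (j : ℝ) / (j - β) := by
    refine prod_nonneg fun j hj => ?_
    have : (b : ℝ) + 1 ≤ j := by exact_mod_cast (mem_Ioc.1 hj).1
    exact div_nonneg (by linarith) (by linarith)
  calc (r : ℝ) ^ (r + b - 2) * ∏ j ∈ Ioc b (n - r + 2), (j : ℝ) / (j - β)
      ≤ (r ^ β * (b ! : ℝ) ^ (β / b)) * ((n - r + 2 : ℕ) ^ β / (b ! : ℝ) ^ (β / b)) :=
        mul_le_mul hrpow (prod_Ioc_div_sub_le hb (by linarith) hβb.le (by omega)) hprod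
          (by positivity)
    _ = r ^ β * (n - r + 2 : ℕ) ^ β := by field_simp
    _ ≤ r ^ β * n ^ β := by
        gcongr
        · linarith
        · exact_mod_cast (by omega : n - r + 2 ≤ n)
    _ = ((r * n : ℕ) : ℝ) ^ β := by rw [← mul_rpow (by positivity) (by positivity), Nat.cast_mul]

theorem pow_le_mul_rpow {r n : ℕ} {β : ℝ} (hr : 2 ≤ r) (hrn : r ≤ n) (hrβ : (r : ℝ) - 2 ≤ β)
    (hnβ : ((n - r + 2 : ℕ) : ℝ) ≤ β) : (r : ℝ) ^ n ≤ ((r * n : ℕ) : ℝ) ^ β := by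
  have hr' : (1 : ℝ) ≤ r := by exact_mod_cast (by omega : 1 ≤ r)
  have hn' : (r : ℝ) ≤ n := by exact_mod_cast hrn
  calc (r : ℝ) ^ n = (r : ℝ) ^ (r - 2) * (r : ℝ) ^ (n - r + 2) := by
        rw [← pow_add]
        congr 1
        omega
    _ ≤ (n : ℝ) ^ β * (r : ℝ) ^ β := by
        refine mul_le_mul ?_ ?_ (by positivity) (by positivity)
        · calc (r : ℝ) ^ (r - 2) ≤ (n : ℝ) ^ (r - 2) := by gcongr
            _ ≤ (n : ℝ) ^ β := by
              rw [← rpow_natCast]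
              exact rpow_le_rpow_of_exponent_le (by linarith)
                (by push_cast [Nat.cast_sub hr]; linarith)
        · rw [← rpow_natCast]
          exact rpow_le_rpow_of_exponent_le hr' hnβ
    _ = ((r * n : ℕ) : ℝ) ^ β := by
        rw [mul_comm, ← mul_rpow (by positivity) (by positivity), Nat.cast_mul]

end Estimates

theorem stmt8_general {V E : Type} [Fintype V] [DecidableEq V] [Fintype E]
    (ends : E → Sym2 V) (hnd : ∀ e, ¬ (ends e).IsDiag)
    (hconn : (survGraph ends (∅ : Finset E)).Connected)
    (r : ℕ) (hr2 : 2 ≤ r) (hrn : r ≤ Fintype.card V)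
    (cr : ℕ)
    (hmin : ∀ P : Finset (Finset V), IsPartitionInto P r → cr ≤ rCutValue ends P)
    (hex : ∃ P : Finset (Finset V), IsPartitionInto P r ∧ rCutValue ends P = cr)
    (α : ℝ) (hα : 1 ≤ α) :
    ((Finset.univ.filter (fun P : Finset (Finset V) =>
        IsPartitionInto P r ∧ (rCutValue ends P : ℝ) ≤ α * cr)).card : ℝ)
      ≤ ((r * Fintype.card V : ℕ) : ℝ) ^ (2 * α * ((r : ℝ) - 1)) := by
  change (#(rCutsAtMost ends r (α * cr)) : ℝ) ≤ _
  set β := 2 * α * ((r : ℝ) - 1)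
  set b := ⌊β⌋₊ + 1
  have hr : (2 : ℝ) ≤ r := by exact_mod_cast hr2
  have h2r : 2 * ((r : ℝ) - 1) ≤ β := by nlinarith
  have hbβ : (b : ℝ) - 1 ≤ β := by
    simpa [b] using Nat.floor_le (by linarith : 0 ≤ β)
  have hβb : β < b := by simpa [b] using Nat.lt_floor_add_one β
  have hcr : 0 < cr := by
    obtain ⟨P, hP, rfl⟩ := hex
    exact rCutValue_pos hconn hr2 hP
  by_cases hn : r + b - 2 ≤ Fintype.card V
  · refine (card_rCutsAtMost_le_pow_mul_prod hr2 ?_ hcr (by linarith) (by linarith) (by linarith)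
      _ hn ends hnd rfl hmin).trans (pow_mul_prod_Ioc_le_mul_rpow hr2 h2r hbβ hβb hn)
    exact_mod_cast (by linarith : (2 : ℝ) ≤ b)
  · calc (#(rCutsAtMost ends r (α * cr)) : ℝ) ≤ (r : ℝ) ^ Fintype.card V := by
          exact_mod_cast card_rCutsAtMost_le_pow ends r (α * cr)
      _ ≤ _ := pow_le_mul_rpow hr2 hrn (by linarith) <| by
          have : Fintype.card V - r + 2 ≤ b - 1 := by omega
          calc ((Fintype.card V - r + 2 : ℕ) : ℝ) ≤ (b - 1 : ℕ) := by exact_mod_cast this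
            _ ≤ β := by push_cast [Nat.cast_sub (by omega : 1 ≤ b)]; exact hbβ

/-- Let `G` be a connected multigraph on `n ≥ 2` vertices, `r` an integer with
`2 ≤ r ≤ n`, `cr` its minimum `r`-way cut value, and `α ≥ 1` a real number.  Then the number of
distinct `α`-minimum `r`-way cuts of `G` (those of value at most `α * cr`) is at most
`(r n) ^ (2 α (r - 1))`. -/
theorem stmt8 {V E : Type} [Fintype V] [DecidableEq V] [Fintype E]
    (ends : E → Sym2 V) (hnd : ∀ e, ¬ (ends e).IsDiag)
    (hn : 2 ≤ Fintype.card V)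
    (hconn : (survGraph ends (∅ : Finset E)).Connected)
    (r : ℕ) (hr2 : 2 ≤ r) (hrn : r ≤ Fintype.card V)
    (cr : ℕ)
    (hmin : ∀ P : Finset (Finset V), IsPartitionInto P r → cr ≤ rCutValue ends P)
    (hex : ∃ P : Finset (Finset V), IsPartitionInto P r ∧ rCutValue ends P = cr)
    (α : ℝ) (hα : 1 ≤ α) :
    ((Finset.univ.filter (fun P : Finset (Finset V) =>
        IsPartitionInto P r ∧ (rCutValue ends P : ℝ) ≤ α * cr)).card : ℝ)
      ≤ ((r * Fintype.card V : ℕ) : ℝ) ^ (2 * α * ((r : ℝ) - 1)) :=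
  stmt8_general ends hnd hconn r hr2 hrn cr hmin hex α hα
end

section
/- Let G be a connected multigraph on n ≥ 2 vertices, let r be an integer with 2 ≤ r ≤ n, and let c_r be its minimum r-way cut value. Suppose each edge fails independently with probability p ∈ [0,1], where p^{c_r} = (rn)^{-(2+δ)(r−1)} for some real δ > 0. Then for every real α ≥ 1, the probability that some r-way cut of G of value at least α·c_r fails (all edges of its edge set fail) is at most (rn)^{-αδ(r−1)}(1 + 2/δ). -/
open scoped Classical

namespace S9
open Finset



lemma rpow_neg_anti {x y c : ℝ} (hx : 0 < x) (hxy : x ≤ y) (hc : 0 ≤ c) :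
    y ^ (-c) ≤ x ^ (-c) := by
  rw [Real.rpow_neg hx.le, Real.rpow_neg (hx.trans_le hxy).le]
  exact inv_anti₀ (Real.rpow_pos_of_pos hx c) (Real.rpow_le_rpow hx.le hxy hc)

lemma tangent {a b θ : ℝ} (ha : 0 < a) (hab : a ≤ b) (hθ : 0 < θ) :
    θ * (b - a) * b ^ (-(1+θ)) ≤ a ^ (-θ) - b ^ (-θ) := by
  have hb : 0 < b := ha.trans_le hab
  have hbt : (0:ℝ) < b ^ (-θ) := Real.rpow_pos_of_pos hb _
  have e1 : a ^ (-θ) = b ^ (-θ) * Real.exp (θ * (Real.log b - Real.log a)) := by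
    rw [Real.rpow_def_of_pos ha, Real.rpow_def_of_pos hb, ← Real.exp_add]
    ring_nf
  have e2 : b ^ (-(1+θ)) = b ^ (-θ) * b⁻¹ := by
    rw [← Real.rpow_neg_one b, ← Real.rpow_add hb]
    ring_nf
  have h3 : θ * (Real.log b - Real.log a) + 1 ≤ Real.exp (θ * (Real.log b - Real.log a)) :=
    Real.add_one_le_exp _
  have h4 : 1 - a/b ≤ Real.log b - Real.log a := by
    have h1 : Real.log (a/b) ≤ a/b - 1 := Real.log_le_sub_one_of_pos (by positivity)
    rw [Real.log_div ha.ne' hb.ne'] at h1; linarith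
  have h5 : (b-a)/b ≤ Real.log b - Real.log a := by
    have : (b-a)/b = 1 - a/b := by field_simp
    linarith [this]
  have hb' : b⁻¹ * b = 1 := inv_mul_cancel₀ hb.ne'
  calc θ * (b-a) * b ^ (-(1+θ)) = b ^ (-θ) * (θ * ((b-a)/b)) := by
        rw [e2]; field_simp
    _ ≤ b ^ (-θ) * (θ * (Real.log b - Real.log a)) := by
        have := mul_le_mul_of_nonneg_left h5 hθ.le
        exact mul_le_mul_of_nonneg_left this hbt.le
    _ ≤ a ^ (-θ) - b ^ (-θ) := by rw [e1]; nlinarith [h3, hbt]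

noncomputable def GG (θ x0 x : ℝ) : ℝ :=
  (1+1/θ) * x0 ^ (-θ) - (1/θ) * (max x x0) ^ (-θ) - (max (x0 - x) 0) * x0 ^ (-(1+θ))

lemma GG_zero {θ x0 : ℝ} (hθ : 0 < θ) (hx0 : 0 < x0) : GG θ x0 0 = 0 := by
  have key : x0 * x0 ^ (-(1+θ)) = x0 ^ (-θ) := by
    nth_rewrite 1 [← Real.rpow_one x0]
    rw [← Real.rpow_add hx0]; norm_num
  unfold GG
  rw [max_eq_right hx0.le, sub_zero, max_eq_left hx0.le, key]
  ring

lemma GG_le {θ x0 x : ℝ} (hθ : 0 < θ) (hx0 : 0 < x0) :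
    GG θ x0 x ≤ (1+1/θ) * x0 ^ (-θ) := by
  unfold GG
  have h1 : (0:ℝ) ≤ (1/θ) * (max x x0) ^ (-θ) := by
    apply mul_nonneg (by positivity)
    exact (Real.rpow_pos_of_pos (lt_max_of_lt_right hx0) _).le
  have h2 : (0:ℝ) ≤ (max (x0 - x) 0) * x0 ^ (-(1+θ)) := by
    apply mul_nonneg (le_max_right _ _) (Real.rpow_pos_of_pos hx0 _).le
  linarith

lemma GG_step {θ x0 N : ℝ} (hθ : 0 < θ) (hx0 : 1 ≤ x0) (hN : 1 ≤ N) :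
    (max N x0) ^ (-(1+θ)) ≤ GG θ x0 N - GG θ x0 (N-1) := by
  have hx0' : (0:ℝ) < x0 := lt_of_lt_of_le one_pos hx0
  by_cases hA : N ≤ x0
  · rw [max_eq_right hA]
    unfold GG
    rw [max_eq_right hA, max_eq_right (by linarith : N - 1 ≤ x0),
      max_eq_left (by linarith : (0:ℝ) ≤ x0 - N),
      max_eq_left (by linarith : (0:ℝ) ≤ x0 - (N-1))]
    ring_nf
    nlinarith [Real.rpow_pos_of_pos hx0' (-(1+θ))]
  · push_neg at hA
    rw [max_eq_left hA.le]
    by_cases hB : x0 ≤ N - 1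
    · unfold GG
      rw [max_eq_left (by linarith : x0 ≤ N), max_eq_left hB,
        max_eq_right (by linarith : x0 - N ≤ 0), max_eq_right (by linarith : x0 - (N-1) ≤ 0)]
      have ht := tangent (a := N-1) (b := N) (by linarith) (by linarith) hθ
      have ht2 := mul_le_mul_of_nonneg_left ht (inv_nonneg.mpr hθ.le)
      ring_nf at ht2 ⊢
      have hinv2 : θ * θ⁻¹ = 1 := mul_inv_cancel₀ hθ.ne'
      rw [hinv2, one_mul] at ht2
      linarith [ht2]
    · push_neg at hB
      unfold GG
      rw [max_eq_left hA.le, max_eq_right (by linarith : N - 1 ≤ x0),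
        max_eq_right (by linarith : x0 - N ≤ 0), max_eq_left (by linarith : (0:ℝ) ≤ x0 - (N-1))]
      have ht := tangent (a := x0) (b := N) hx0' hA.le hθ
      have h2 : N ^ (-(1+θ)) ≤ x0 ^ (-(1+θ)) := rpow_neg_anti hx0' hA.le (by linarith)
      have h3 : (1/θ) * (θ * (N - x0) * N ^ (-(1+θ))) ≤ (1/θ) * (x0 ^ (-θ) - N ^ (-θ)) := by
        apply mul_le_mul_of_nonneg_left ht (by positivity)
      have h4 : (x0 - (N-1)) * N ^ (-(1+θ)) ≤ (x0 - (N-1)) * x0 ^ (-(1+θ)) := by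
        apply mul_le_mul_of_nonneg_left h2 (by linarith)
      have h5 : (1/θ) * (θ * (N - x0) * N ^ (-(1+θ))) = (N - x0) * N ^ (-(1+θ)) := by
        field_simp
      nlinarith [h3, h4, h5]

lemma sum_rank {β : Type*} [DecidableEq β] (θ x0 : ℝ) (hθ : 0 < θ) (hx0 : 1 ≤ x0) :
    ∀ (n : ℕ) (S : Finset β) (y : β → ℝ), S.card = n →
      (∀ P ∈ S, x0 ≤ y P) →
      (∀ P ∈ S, ((S.filter (fun P' => y P' ≤ y P)).card : ℝ) ≤ y P) →
      ∑ P ∈ S, (y P) ^ (-(1+θ)) ≤ GG θ x0 n := by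
  have hx0' : (0:ℝ) < x0 := lt_of_lt_of_le one_pos hx0
  intro n
  induction n with
  | zero => intro S y hcard _ _
            rw [Finset.card_eq_zero.mp hcard]
            simp [GG_zero hθ hx0']
  | succ n ih =>
    intro S y hcard hge hcount
    have hne : S.Nonempty := Finset.card_pos.mp (by omega)
    obtain ⟨P, hP, hmax⟩ := Finset.exists_max_image S y hne
    have hyP : ((n:ℝ)+1) ≤ y P := by
      have : S.filter (fun P' => y P' ≤ y P) = S := by
        apply Finset.filter_true_of_mem
        intro x hx; exact hmax x hx
      have h := hcount P hP
      rw [this, hcard] at h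
      push_cast at h; linarith
    have hx0P : x0 ≤ y P := hge P hP
    have hyPpos : 0 < y P := lt_of_lt_of_le hx0' hx0P
    have hkey : (y P) ^ (-(1+θ)) ≤ (max ((n:ℝ)+1) x0) ^ (-(1+θ)) := by
      apply rpow_neg_anti _ _ (by linarith)
      · exact lt_max_of_lt_right hx0'
      · exact max_le hyP hx0P
    have hsub : ∀ P' ∈ S.erase P, x0 ≤ y P' := fun P' h => hge P' (Finset.mem_of_mem_erase h)
    have hsub2 : ∀ P' ∈ S.erase P,
        (((S.erase P).filter (fun P'' => y P'' ≤ y P')).card : ℝ) ≤ y P' := by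
      intro P' h
      refine le_trans ?_ (hcount P' (Finset.mem_of_mem_erase h))
      exact_mod_cast Finset.card_le_card (Finset.filter_subset_filter _ (Finset.erase_subset _ _))
    have ihe := ih (S.erase P) y (by rw [Finset.card_erase_of_mem hP, hcard]; rfl) hsub hsub2
    have hstep := GG_step (N := (n:ℝ)+1) hθ hx0 (by have : (0:ℝ) ≤ (n:ℝ) := Nat.cast_nonneg n; linarith)
    have hsum : ∑ P' ∈ S, (y P') ^ (-(1+θ))
        = (y P) ^ (-(1+θ)) + ∑ P' ∈ S.erase P, (y P') ^ (-(1+θ)) := by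
      rw [← Finset.add_sum_erase _ _ hP]
    rw [hsum]
    have : ((n:ℝ)+1) - 1 = (n:ℝ) := by ring
    rw [this] at hstep
    push_cast
    linarith


variable {E' : Type}
section Prob
variable {E : Type} [Fintype E] [DecidableEq E]


lemma binom_one (p : ℝ) (s : Finset E) :
    ∑ D ∈ s.powerset, p ^ D.card * (1-p) ^ (s.card - D.card) = 1 := by
  have h := Finset.prod_add (fun _ : E => p) (fun _ => 1 - p) s
  have h2 : ∀ t ∈ s.powerset, (∏ _i ∈ t, p) * ∏ _i ∈ s \ t, (1-p)
      = p ^ t.card * (1-p) ^ (s.card - t.card) := by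
    intro t ht
    rw [Finset.prod_const, Finset.prod_const, Finset.card_sdiff_of_subset (Finset.mem_powerset.mp ht)]
  rw [Finset.sum_congr rfl h2] at h
  rw [← h, Finset.prod_const]
  norm_num

lemma sum_containing (p : ℝ) (C : Finset E) :
    ∑ F ∈ Finset.univ.filter (fun F : Finset E => C ⊆ F),
      p ^ F.card * (1-p) ^ (Fintype.card E - F.card) = p ^ C.card := by
  classical
  have hbij : ∑ F ∈ Finset.univ.filter (fun F : Finset E => C ⊆ F),
      p ^ F.card * (1-p) ^ (Fintype.card E - F.card)
      = ∑ D ∈ (Finset.univ \ C).powerset,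
          p ^ C.card * (p ^ D.card * (1-p) ^ ((Finset.univ \ C).card - D.card)) := by
    apply Finset.sum_nbij' (i := fun F => F \ C) (j := fun D => C ∪ D)
    · intro F hF
      rw [Finset.mem_powerset]
      exact Finset.sdiff_subset_sdiff (Finset.subset_univ F) (le_refl C)
    · intro D _
      simp only [Finset.mem_filter, Finset.mem_univ, true_and]
      exact Finset.subset_union_left
    · intro F hF
      exact Finset.union_sdiff_of_subset (Finset.mem_filter.mp hF).2
    · intro D hD
      apply Finset.union_sdiff_cancel_left
      rw [Finset.mem_powerset] at hD
      rw [Finset.disjoint_left]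
      intro a haC haD
      exact (Finset.mem_sdiff.mp (hD haD)).2 haC
    · intro F hF
      have hsub := (Finset.mem_filter.mp hF).2
      have hle : C.card ≤ F.card := Finset.card_le_card hsub
      have hFm : F.card ≤ Fintype.card E := by
        simpa using Finset.card_le_card (Finset.subset_univ F)
      have hCm : C.card ≤ Fintype.card E := by
        simpa using Finset.card_le_card (Finset.subset_univ C)
      have h1 : (F \ C).card = F.card - C.card := Finset.card_sdiff_of_subset hsub
      have h2 : (Finset.univ \ C).card = Fintype.card E - C.card := by
        rw [Finset.card_sdiff_of_subset (Finset.subset_univ C), Finset.card_univ]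
      rw [← mul_assoc, ← pow_add, h1, h2]
      have e1 : C.card + (F.card - C.card) = F.card := by omega
      have e2 : Fintype.card E - C.card - (F.card - C.card) = Fintype.card E - F.card := by omega
      rw [e1, e2]
  rw [hbij, ← Finset.mul_sum, binom_one, mul_one]

lemma sum_biUnion_le' {ι κ : Type*} [DecidableEq κ] (s : Finset ι) (t : ι → Finset κ)
    (f : κ → ℝ) (hf : ∀ x, 0 ≤ f x) :
    ∑ x ∈ s.biUnion t, f x ≤ ∑ i ∈ s, ∑ x ∈ t i, f x := by
  classical
  induction s using Finset.induction with
  | empty => simp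
  | @insert a s ha ih =>
    rw [Finset.biUnion_insert, Finset.sum_insert ha]
    have h1 : ∑ x ∈ t a ∪ s.biUnion t, f x + ∑ x ∈ t a ∩ s.biUnion t, f x
        = ∑ x ∈ t a, f x + ∑ x ∈ s.biUnion t, f x := Finset.sum_union_inter
    have h2 : (0:ℝ) ≤ ∑ x ∈ t a ∩ s.biUnion t, f x := Finset.sum_nonneg fun x _ => hf x
    linarith [ih]

lemma union_bound {β : Type*} [DecidableEq β] (p : ℝ) (hp0 : 0 ≤ p) (hp1 : p ≤ 1)
    (S : Finset β) (cut : β → Finset E) :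
    failurePr p (Finset.univ.filter (fun F : Finset E => ∃ P ∈ S, cut P ⊆ F))
      ≤ ∑ P ∈ S, p ^ (cut P).card := by
  classical
  unfold failurePr
  have hw : ∀ F : Finset E, 0 ≤ p ^ F.card * (1-p) ^ (Fintype.card E - F.card) := by
    intro F
    apply mul_nonneg (pow_nonneg hp0 _) (pow_nonneg (by linarith) _)
  have hsub : Finset.univ.filter (fun F : Finset E => ∃ P ∈ S, cut P ⊆ F)
      ⊆ S.biUnion (fun P => Finset.univ.filter (fun F : Finset E => cut P ⊆ F)) := by
    intro F hF
    obtain ⟨P, hP, hPF⟩ := (Finset.mem_filter.mp hF).2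
    rw [Finset.mem_biUnion]
    exact ⟨P, hP, Finset.mem_filter.mpr ⟨Finset.mem_univ _, hPF⟩⟩
  calc ∑ F ∈ Finset.univ.filter (fun F : Finset E => ∃ P ∈ S, cut P ⊆ F),
        p ^ F.card * (1-p) ^ (Fintype.card E - F.card)
      ≤ ∑ F ∈ S.biUnion (fun P => Finset.univ.filter (fun F : Finset E => cut P ⊆ F)),
        p ^ F.card * (1-p) ^ (Fintype.card E - F.card) :=
        Finset.sum_le_sum_of_subset_of_nonneg hsub (fun F _ _ => hw F)
    _ ≤ ∑ P ∈ S, ∑ F ∈ Finset.univ.filter (fun F : Finset E => cut P ⊆ F),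
        p ^ F.card * (1-p) ^ (Fintype.card E - F.card) :=
        sum_biUnion_le' _ _ _ hw
    _ = ∑ P ∈ S, p ^ (cut P).card := by
        apply Finset.sum_congr rfl
        intro P _
        exact sum_containing p (cut P)


end Prob

variable {V E : Type} [Fintype V] [DecidableEq V] [Fintype E]

def Coarser {V : Type} (C P : Finset (Finset V)) : Prop := ∀ A ∈ C, ∃ B ∈ P, A ⊆ B

lemma part_unique {P : Finset (Finset V)} {k : ℕ} (hP : IsPartitionInto P k)
    {A B : Finset V} {x : V} (hA : A ∈ P) (hB : B ∈ P) (hxA : x ∈ A) (hxB : x ∈ B) :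
    A = B := by
  by_contra hne
  exact Finset.disjoint_left.mp (hP.2.2.1 A hA B hB hne) hxA hxB

lemma exu {P : Finset (Finset V)} {k : ℕ} (hP : IsPartitionInto P k) {A : Finset V}
    (hA : A.Nonempty) (hex : ∃ B ∈ P, A ⊆ B) : ∃! B, B ∈ P ∧ A ⊆ B := by
  obtain ⟨B, hB, hAB⟩ := hex
  obtain ⟨x, hx⟩ := hA
  refine ⟨B, ⟨hB, hAB⟩, ?_⟩
  rintro B' ⟨hB', hAB'⟩
  exact part_unique hP hB' hB (hAB' hx) (hAB hx)

lemma coarser_trans {C D P : Finset (Finset V)} (h1 : Coarser C D) (h2 : Coarser D P) :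
    Coarser C P := by
  intro A hA
  obtain ⟨B, hB, hAB⟩ := h1 A hA
  obtain ⟨B', hB', hBB'⟩ := h2 B hB
  exact ⟨B', hB', hAB.trans hBB'⟩

lemma cutEdges_subset_of_coarser (ends : E → Sym2 V) {C P : Finset (Finset V)}
    (h : Coarser C P) : rCutEdges ends P ⊆ rCutEdges ends C := by
  intro e he
  simp only [rCutEdges, Finset.mem_filter, Finset.mem_univ, true_and] at he ⊢
  rintro ⟨A, hA, hall⟩
  obtain ⟨B, hB, hAB⟩ := h A hA
  exact he ⟨B, hB, fun z hz => hAB (hall z hz)⟩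

/-- the set of `r`-way cuts of value at most `T` that are coarser than `C` -/
noncomputable def cuts (ends : E → Sym2 V) (r T : ℕ) (C : Finset (Finset V)) :
    Finset (Finset (Finset V)) :=
  Finset.univ.filter (fun P => IsPartitionInto P r ∧ rCutValue ends P ≤ T ∧ Coarser C P)

noncomputable def mergeEdge (ends : E → Sym2 V) (C : Finset (Finset V)) (e : E) :
    Finset (Finset V) :=
  insert ((C.filter (fun A => ∃ z ∈ ends e, z ∈ A)).sup id)
    (C.filter (fun A => ¬ ∃ z ∈ ends e, z ∈ A))

lemma mergeEdge_spec (ends : E → Sym2 V) {C : Finset (Finset V)} {k : ℕ} (hk : 1 ≤ k)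
    (hC : IsPartitionInto C (k+1)) {e : E} (he : rCrosses ends C e) :
    IsPartitionInto (mergeEdge ends C e) k ∧ Coarser C (mergeEdge ends C e) := by
  obtain ⟨xy, hxy⟩ := Quot.exists_rep (ends e)
  obtain ⟨x, y⟩ := xy
  have hxy' : ends e = s(x, y) := hxy.symm
  obtain ⟨Ax, hAx, hxAx⟩ := hC.2.2.2 x
  obtain ⟨Ay, hAy, hyAy⟩ := hC.2.2.2 y
  have hmem : ∀ z, z ∈ ends e ↔ (z = x ∨ z = y) := by
    intro z; rw [hxy']; exact Sym2.mem_iff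
  have hne : Ax ≠ Ay := by
    intro hcon
    apply he
    refine ⟨Ax, hAx, fun z hz => ?_⟩
    rcases (hmem z).mp hz with h | h
    · rwa [h]
    · rw [h, hcon]; exact hyAy
  have htouch : ∀ A ∈ C, (∃ z ∈ ends e, z ∈ A) ↔ (A = Ax ∨ A = Ay) := by
    intro A hA
    constructor
    · rintro ⟨z, hz, hzA⟩
      rcases (hmem z).mp hz with h | h
      · left; exact part_unique hC hA hAx (h ▸ hzA) hxAx
      · right; exact part_unique hC hA hAy (h ▸ hzA) hyAy
    · rintro (h | h)
      · exact ⟨x, (hmem x).mpr (Or.inl rfl), h ▸ hxAx⟩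
      · exact ⟨y, (hmem y).mpr (Or.inr rfl), h ▸ hyAy⟩
  have hfilter : C.filter (fun A => ∃ z ∈ ends e, z ∈ A) = {Ax, Ay} := by
    ext A
    simp only [Finset.mem_filter, Finset.mem_insert, Finset.mem_singleton]
    constructor
    · rintro ⟨hA, h⟩; exact (htouch A hA).mp h
    · rintro (h | h)
      · exact ⟨h ▸ hAx, (htouch A (h ▸ hAx)).mpr (Or.inl h)⟩
      · exact ⟨h ▸ hAy, (htouch A (h ▸ hAy)).mpr (Or.inr h)⟩
  have hfilter2 : C.filter (fun A => ¬ ∃ z ∈ ends e, z ∈ A) = C \ {Ax, Ay} := by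
    ext A
    simp only [Finset.mem_filter, Finset.mem_sdiff, Finset.mem_insert, Finset.mem_singleton]
    constructor
    · rintro ⟨hA, h⟩
      refine ⟨hA, ?_⟩
      rw [htouch A hA] at h
      tauto
    · rintro ⟨hA, h⟩
      refine ⟨hA, ?_⟩
      rw [htouch A hA]
      tauto
  have hsup : (C.filter (fun A => ∃ z ∈ ends e, z ∈ A)).sup id = Ax ∪ Ay := by
    rw [hfilter]
    rw [Finset.sup_insert, Finset.sup_singleton]
    rfl
  have hpair : {Ax, Ay} ⊆ C := by
    intro A hA
    rcases Finset.mem_insert.mp hA with h | h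
    · exact h ▸ hAx
    · exact (Finset.mem_singleton.mp h) ▸ hAy
  have hUnotmem : Ax ∪ Ay ∉ C \ {Ax, Ay} := by
    rintro hU
    rw [Finset.mem_sdiff] at hU
    have hxU : x ∈ Ax ∪ Ay := Finset.mem_union_left _ hxAx
    have := part_unique hC hU.1 hAx hxU hxAx
    simp [this] at hU
  have hcard : (mergeEdge ends C e).card = k := by
    unfold mergeEdge
    rw [hfilter2, hsup, Finset.card_insert_of_notMem hUnotmem,
      Finset.card_sdiff_of_subset hpair, Finset.card_pair hne, hC.1]
    omega
  have hmemmerge : ∀ A, A ∈ mergeEdge ends C e ↔ (A = Ax ∪ Ay ∨ (A ∈ C ∧ A ≠ Ax ∧ A ≠ Ay)) := by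
    intro A
    unfold mergeEdge
    rw [hfilter2, hsup, Finset.mem_insert, Finset.mem_sdiff]
    simp only [Finset.mem_insert, Finset.mem_singleton]
    tauto
  constructor
  · refine ⟨hcard, ?_, ?_, ?_⟩
    · intro A hA
      rcases (hmemmerge A).mp hA with h | h
      · exact ⟨x, h ▸ Finset.mem_union_left _ hxAx⟩
      · exact hC.2.1 A h.1
    · intro A hA B hB hAB
      rcases (hmemmerge A).mp hA with h1 | h1 <;> rcases (hmemmerge B).mp hB with h2 | h2
      · exact absurd (h1.trans h2.symm) hAB
      · rw [h1, Finset.disjoint_union_left]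
        exact ⟨(hC.2.2.1 Ax hAx B h2.1 (Ne.symm h2.2.1)).symm.symm,
          (hC.2.2.1 Ay hAy B h2.1 (Ne.symm h2.2.2)).symm.symm⟩
      · rw [h2, Finset.disjoint_union_right]
        exact ⟨hC.2.2.1 A h1.1 Ax hAx h1.2.1, hC.2.2.1 A h1.1 Ay hAy h1.2.2⟩
      · exact hC.2.2.1 A h1.1 B h2.1 hAB
    · intro z
      obtain ⟨A, hA, hz⟩ := hC.2.2.2 z
      by_cases hcase : A = Ax ∨ A = Ay
      · refine ⟨Ax ∪ Ay, (hmemmerge _).mpr (Or.inl rfl), ?_⟩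
        rcases hcase with h | h
        · exact Finset.mem_union_left _ (h ▸ hz)
        · exact Finset.mem_union_right _ (h ▸ hz)
      · push_neg at hcase
        exact ⟨A, (hmemmerge A).mpr (Or.inr ⟨hA, hcase⟩), hz⟩
  · intro A hA
    by_cases hcase : A = Ax ∨ A = Ay
    · refine ⟨Ax ∪ Ay, (hmemmerge _).mpr (Or.inl rfl), ?_⟩
      rcases hcase with h | h
      · rw [h]; exact Finset.subset_union_left
      · rw [h]; exact Finset.subset_union_right
    · push_neg at hcase
      exact ⟨A, (hmemmerge A).mpr (Or.inr ⟨hA, hcase⟩), le_refl A⟩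

lemma mem_cuts_merge (ends : E → Sym2 V) {C P : Finset (Finset V)} {r T : ℕ}
    (hP : P ∈ cuts ends r T C) {e : E} (heP : e ∉ rCutEdges ends P) :
    P ∈ cuts ends r T (mergeEdge ends C e) := by
  simp only [cuts, Finset.mem_filter, Finset.mem_univ, true_and] at hP ⊢
  obtain ⟨hPpart, hPval, hPco⟩ := hP
  refine ⟨hPpart, hPval, ?_⟩
  have heP' : ∃ B ∈ P, ∀ z ∈ ends e, z ∈ B := by
    simpa [rCutEdges, rCrosses] using heP
  obtain ⟨B, hB, hall⟩ := heP'
  intro A hA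
  unfold mergeEdge at hA
  rcases Finset.mem_insert.mp hA with h | h
  · refine ⟨B, hB, ?_⟩
    rw [h, ← Finset.le_iff_subset]
    apply Finset.sup_le
    intro A' hA'
    obtain ⟨hA'C, z, hz, hzA'⟩ := Finset.mem_filter.mp hA'
    obtain ⟨B', hB', hA'B'⟩ := hPco A' hA'C
    have : B' = B := part_unique hPpart hB' hB (hA'B' hzA') (hall z hz)
    rw [← this]
    exact Finset.le_iff_subset.mpr hA'B'
  · exact hPco A (Finset.mem_filter.mp h).1

lemma cuts_merge_subset (ends : E → Sym2 V) {C : Finset (Finset V)} {r T k : ℕ} (hk : 1 ≤ k)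
    (hC : IsPartitionInto C (k+1)) {e : E} (he : e ∈ rCutEdges ends C) :
    cuts ends r T (mergeEdge ends C e) ⊆ cuts ends r T C := by
  intro P hP
  simp only [cuts, Finset.mem_filter, Finset.mem_univ, true_and] at hP ⊢
  have hco := (mergeEdge_spec ends hk hC (by simpa [rCutEdges] using he)).2
  exact ⟨hP.1, hP.2.1, coarser_trans hco hP.2.2⟩


noncomputable def partAbove (P : Finset (Finset V)) (A : Finset V) : Finset V :=
  if h : ∃! B, B ∈ P ∧ A ⊆ B then P.choose (fun B => A ⊆ B) h else ∅

lemma partAbove_mem {P : Finset (Finset V)} {A : Finset V} (h : ∃! B, B ∈ P ∧ A ⊆ B) :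
    partAbove P A ∈ P ∧ A ⊆ partAbove P A := by
  rw [partAbove, dif_pos h]
  exact ⟨Finset.choose_mem _ _ _, Finset.choose_property _ _ _⟩

lemma partAbove_eq {P : Finset (Finset V)} {A B : Finset V} (h : ∃! B, B ∈ P ∧ A ⊆ B)
    (hB : B ∈ P) (hAB : A ⊆ B) : partAbove P A = B := by
  have hm := partAbove_mem h
  exact h.unique ⟨hm.1, hm.2⟩ ⟨hB, hAB⟩

noncomputable def lab (r : ℕ) [NeZero r] (A0 : Finset V) (P : Finset (Finset V))
    (A : Finset V) : Fin r :=
  if h : P.card = r ∧ ∃! B, B ∈ P ∧ A0 ⊆ B then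
    if h2 : ∃! B, B ∈ P ∧ A ⊆ B then
      (Equiv.swap ((Finset.equivFinOfCardEq h.1) ⟨partAbove P A0, (partAbove_mem h.2).1⟩) 0)
        ((Finset.equivFinOfCardEq h.1) ⟨partAbove P A, (partAbove_mem h2).1⟩)
    else 0
  else 0

lemma lab_A0 (r : ℕ) [NeZero r] (A0 : Finset V) (P : Finset (Finset V))
    (h : P.card = r ∧ ∃! B, B ∈ P ∧ A0 ⊆ B) : lab r A0 P A0 = 0 := by
  rw [lab, dif_pos h, dif_pos h.2]
  exact Equiv.swap_apply_left _ _

lemma lab_congr (r : ℕ) [NeZero r] (A0 : Finset V) (P : Finset (Finset V)) {A A' : Finset V}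
    (h : P.card = r ∧ ∃! B, B ∈ P ∧ A0 ⊆ B)
    (h2 : ∃! B, B ∈ P ∧ A ⊆ B) (h2' : ∃! B, B ∈ P ∧ A' ⊆ B) :
    lab r A0 P A = lab r A0 P A' ↔ partAbove P A = partAbove P A' := by
  simp only [lab]
  rw [dif_pos h, dif_pos h2, dif_pos h, dif_pos h2']
  constructor
  · intro heq
    have := (Finset.equivFinOfCardEq h.1).injective ((Equiv.swap _ 0).injective heq)
    exact Subtype.ext_iff.mp this
  · intro heq
    have : (⟨partAbove P A, (partAbove_mem h2).1⟩ : {B // B ∈ P})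
        = ⟨partAbove P A', (partAbove_mem h2').1⟩ := Subtype.ext heq
    rw [this]

variable {V E : Type} [Fintype V] [DecidableEq V] [Fintype E]

lemma mem_cuts_iff {ends : E → Sym2 V} {r T : ℕ} {C P : Finset (Finset V)} :
    P ∈ cuts ends r T C ↔ IsPartitionInto P r ∧ rCutValue ends P ≤ T ∧ Coarser C P := by
  simp only [cuts, Finset.mem_filter, Finset.mem_univ, true_and]

lemma cuts_card_base (ends : E → Sym2 V) {r T k : ℕ} (hr : 1 ≤ r) {C : Finset (Finset V)}
    (hC : IsPartitionInto C k) (hk : 1 ≤ k) :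
    (cuts ends r T C).card ≤ r ^ (k-1) := by
  classical
  haveI : NeZero r := ⟨by omega⟩
  have hCne : C.Nonempty := Finset.card_pos.mp (by rw [hC.1]; omega)
  obtain ⟨A0, hA0⟩ := hCne
  have hcond : ∀ P ∈ cuts ends r T C, ∀ A ∈ C, P.card = r ∧ (∃! B, B ∈ P ∧ A ⊆ B) := by
    intro P hP A hA
    rw [mem_cuts_iff] at hP
    exact ⟨hP.1.1, exu hP.1 (hC.2.1 A hA) (hP.2.2 A hA)⟩
  have hrecon : ∀ P ∈ cuts ends r T C, ∀ A ∈ C,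
      (C.filter (fun A' => lab r A0 P A' = lab r A0 P A)).sup id = partAbove P A := by
    intro P hP A hA
    have hPm : IsPartitionInto P r := (mem_cuts_iff.mp hP).1
    have h0 := hcond P hP A0 hA0
    have hApair := hcond P hP A hA
    refine le_antisymm (Finset.sup_le ?_) ?_
    · intro A' hA'
      obtain ⟨hA'C, hlabeq⟩ := Finset.mem_filter.mp hA'
      have hA'pair := hcond P hP A' hA'C
      have hpa := (lab_congr r A0 P ⟨h0.1, h0.2⟩ hA'pair.2 hApair.2).mp hlabeq
      have hsub := (partAbove_mem hA'pair.2).2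
      rw [hpa] at hsub
      exact Finset.le_iff_subset.mpr hsub
    · rw [Finset.le_iff_subset]
      intro x hx
      obtain ⟨Ax, hAx, hxAx⟩ := hC.2.2.2 x
      have hAxpair := hcond P hP Ax hAx
      have hpaeq : partAbove P Ax = partAbove P A :=
        part_unique hPm (partAbove_mem hAxpair.2).1 (partAbove_mem hApair.2).1
          ((partAbove_mem hAxpair.2).2 hxAx) hx
      exact Finset.mem_sup.mpr ⟨Ax, Finset.mem_filter.mpr
        ⟨hAx, (lab_congr r A0 P ⟨h0.1, h0.2⟩ hAxpair.2 hApair.2).mpr hpaeq⟩, hxAx⟩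
  have hcard : Fintype.card ({A // A ∈ C.erase A0} → Fin r) = r ^ (k-1) := by
    rw [Fintype.card_fun, Fintype.card_coe, Fintype.card_fin,
      Finset.card_erase_of_mem hA0, hC.1]
  rw [← hcard, ← Finset.card_univ]
  apply Finset.card_le_card_of_injOn
      (fun P => fun A : {A // A ∈ C.erase A0} => lab r A0 P A.1)
      (fun _ _ => Finset.mem_univ _)
  intro P hP' Q hQ' hPQ
  have hP : P ∈ cuts ends r T C := hP'
  have hQ : Q ∈ cuts ends r T C := hQ'
  have hfull : ∀ A ∈ C, lab r A0 P A = lab r A0 Q A := by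
    intro A hA
    by_cases hA0eq : A = A0
    · subst hA0eq
      rw [lab_A0 r A P ⟨(hcond P hP A hA).1, (hcond P hP A hA).2⟩,
        lab_A0 r A Q ⟨(hcond Q hQ A hA).1, (hcond Q hQ A hA).2⟩]
    · exact congrFun hPQ ⟨A, Finset.mem_erase.mpr ⟨hA0eq, hA⟩⟩
  have hPm : IsPartitionInto P r := (mem_cuts_iff.mp hP).1
  have hQm : IsPartitionInto Q r := (mem_cuts_iff.mp hQ).1
  have hPQsub : P ⊆ Q := by
    intro B hB
    obtain ⟨x, hx⟩ := hPm.2.1 B hB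
    obtain ⟨Ax, hAx, hxAx⟩ := hC.2.2.2 x
    have hp := hcond P hP Ax hAx
    have hq := hcond Q hQ Ax hAx
    have hBpa : partAbove P Ax = B :=
      part_unique hPm (partAbove_mem hp.2).1 hB ((partAbove_mem hp.2).2 hxAx) hx
    have e1 := hrecon P hP Ax hAx
    have e2 := hrecon Q hQ Ax hAx
    have efilter : C.filter (fun A' => lab r A0 P A' = lab r A0 P Ax)
        = C.filter (fun A' => lab r A0 Q A' = lab r A0 Q Ax) := by
      ext A'
      simp only [Finset.mem_filter]
      constructor
      · rintro ⟨h1, h2⟩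
        exact ⟨h1, by rw [← hfull A' h1, ← hfull Ax hAx]; exact h2⟩
      · rintro ⟨h1, h2⟩
        exact ⟨h1, by rw [hfull A' h1, hfull Ax hAx]; exact h2⟩
    rw [← hBpa, ← e1, efilter, e2]
    exact (partAbove_mem hq.2).1
  exact Finset.eq_of_subset_of_card_le hPQsub (by rw [hPm.1, hQm.1])

variable {V E : Type} [Fintype V] [DecidableEq V] [Fintype E]

lemma cuts_pairs (ends : E → Sym2 V) {r T k : ℕ} (hk : 1 ≤ k) {C : Finset (Finset V)}
    (hC : IsPartitionInto C (k+1)) :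
    (cuts ends r T C).card * (rCutValue ends C - T)
      ≤ ∑ e ∈ rCutEdges ends C, (cuts ends r T (mergeEdge ends C e)).card := by
  classical
  have h1 : ∀ e ∈ rCutEdges ends C,
      ((cuts ends r T C).filter (fun P => e ∉ rCutEdges ends P)).card
        ≤ (cuts ends r T (mergeEdge ends C e)).card := by
    intro e _
    apply Finset.card_le_card
    intro P hP
    obtain ⟨hP1, hP2⟩ := Finset.mem_filter.mp hP
    exact mem_cuts_merge ends hP1 hP2
  have h2 : ∀ P ∈ cuts ends r T C,
      rCutValue ends C - T ≤ ((rCutEdges ends C).filter (fun e => e ∉ rCutEdges ends P)).card := by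
    intro P hP
    have hval : rCutValue ends P ≤ T := (mem_cuts_iff.mp hP).2.1
    have heq : (rCutEdges ends C).filter (fun e => e ∉ rCutEdges ends P)
        = rCutEdges ends C \ rCutEdges ends P := by
      ext e
      simp [Finset.mem_sdiff, Finset.mem_filter]
    rw [heq]
    calc rCutValue ends C - T ≤ (rCutEdges ends C).card - (rCutEdges ends P).card := by
          unfold rCutValue at *
          omega
      _ ≤ (rCutEdges ends C \ rCutEdges ends P).card := Finset.le_card_sdiff _ _
  have hswap : ∑ P ∈ cuts ends r T C,
        ((rCutEdges ends C).filter (fun e => e ∉ rCutEdges ends P)).card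
      = ∑ e ∈ rCutEdges ends C,
        ((cuts ends r T C).filter (fun P => e ∉ rCutEdges ends P)).card := by
    simp only [Finset.card_filter]
    exact Finset.sum_comm
  calc (cuts ends r T C).card * (rCutValue ends C - T)
      = ∑ _P ∈ cuts ends r T C, (rCutValue ends C - T) := by
        rw [Finset.sum_const, smul_eq_mul]
    _ ≤ ∑ P ∈ cuts ends r T C,
          ((rCutEdges ends C).filter (fun e => e ∉ rCutEdges ends P)).card :=
        Finset.sum_le_sum h2
    _ = ∑ e ∈ rCutEdges ends C,
          ((cuts ends r T C).filter (fun P => e ∉ rCutEdges ends P)).card := hswap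
    _ ≤ ∑ e ∈ rCutEdges ends C, (cuts ends r T (mergeEdge ends C e)).card :=
        Finset.sum_le_sum h1

lemma exists_small_subset {γ : Type} [DecidableEq γ] (C : Finset γ) (d : γ → ℕ) :
    ∀ j, j ≤ C.card → ∃ D ⊆ C, D.card = j ∧ C.card * ∑ A ∈ D, d A ≤ j * ∑ A ∈ C, d A := by
  intro j
  induction j with
  | zero => intro _; exact ⟨∅, Finset.empty_subset _, rfl, by simp⟩
  | succ j ih =>
    intro hj
    obtain ⟨D, hDC, hDcard, hDsum⟩ := ih (by omega)
    have hne : (C \ D).Nonempty := by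
      rw [← Finset.card_pos, Finset.card_sdiff_of_subset hDC]; omega
    obtain ⟨a, ha, hamin⟩ := Finset.exists_min_image (C \ D) d hne
    have hanotD : a ∉ D := (Finset.mem_sdiff.mp ha).2
    refine ⟨insert a D, ?_, ?_, ?_⟩
    · intro z hz
      rcases Finset.mem_insert.mp hz with h | h
      · exact h ▸ (Finset.mem_sdiff.mp ha).1
      · exact hDC h
    · rw [Finset.card_insert_of_notMem hanotD, hDcard]
    · rw [Finset.sum_insert hanotD]
      have hmin : (C \ D).card * d a ≤ ∑ A ∈ C \ D, d A := by
        have := Finset.card_nsmul_le_sum (C \ D) d (d a) (fun x hx => hamin x hx)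
        simpa [smul_eq_mul] using this
      have hsplit : ∑ A ∈ C \ D, d A + ∑ A ∈ D, d A = ∑ A ∈ C, d A := Finset.sum_sdiff hDC
      obtain ⟨w, hw⟩ : ∃ w, C.card = j + 1 + w := ⟨C.card - (j+1), by omega⟩
      have hcards : (C \ D).card = w + 1 := by rw [Finset.card_sdiff_of_subset hDC, hDcard]; omega
      rw [hcards] at hmin
      rw [← hsplit] at hDsum ⊢
      rw [hw] at hDsum ⊢
      apply Nat.le_of_mul_le_mul_left _ (show 0 < w + 1 by omega)
      nlinarith [Nat.mul_le_mul_left (j+1+w) hmin, Nat.mul_le_mul_left w hDsum, hDsum, hmin]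

noncomputable def degE (ends : E → Sym2 V) (C : Finset (Finset V)) (A : Finset V) : Finset E :=
  (rCutEdges ends C).filter (fun e => ∃ z ∈ ends e, z ∈ A)

lemma crossing_filter_pair (ends : E → Sym2 V) {C : Finset (Finset V)} {k : ℕ}
    (hC : IsPartitionInto C k) {e : E} (he : rCrosses ends C e) :
    ∃ Ax Ay, Ax ∈ C ∧ Ay ∈ C ∧ Ax ≠ Ay ∧
      C.filter (fun A => ∃ z ∈ ends e, z ∈ A) = {Ax, Ay} := by
  obtain ⟨xy, hxy⟩ := Quot.exists_rep (ends e)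
  obtain ⟨x, y⟩ := xy
  have hxy' : ends e = s(x, y) := hxy.symm
  obtain ⟨Ax, hAx, hxAx⟩ := hC.2.2.2 x
  obtain ⟨Ay, hAy, hyAy⟩ := hC.2.2.2 y
  have hmem : ∀ z, z ∈ ends e ↔ (z = x ∨ z = y) := by
    intro z; rw [hxy']; exact Sym2.mem_iff
  have hne : Ax ≠ Ay := by
    intro hcon
    apply he
    refine ⟨Ax, hAx, fun z hz => ?_⟩
    rcases (hmem z).mp hz with h | h
    · rwa [h]
    · rw [h, hcon]; exact hyAy
  refine ⟨Ax, Ay, hAx, hAy, hne, ?_⟩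
  ext A
  simp only [Finset.mem_filter, Finset.mem_insert, Finset.mem_singleton]
  constructor
  · rintro ⟨hA, z, hz, hzA⟩
    rcases (hmem z).mp hz with h | h
    · left; exact part_unique hC hA hAx (h ▸ hzA) hxAx
    · right; exact part_unique hC hA hAy (h ▸ hzA) hyAy
  · rintro (h | h)
    · exact ⟨h ▸ hAx, x, (hmem x).mpr (Or.inl rfl), h ▸ hxAx⟩
    · exact ⟨h ▸ hAy, y, (hmem y).mpr (Or.inr rfl), h ▸ hyAy⟩

lemma sum_degE (ends : E → Sym2 V) {C : Finset (Finset V)} {k : ℕ}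
    (hC : IsPartitionInto C k) :
    ∑ A ∈ C, (degE ends C A).card = 2 * rCutValue ends C := by
  classical
  have hswap : ∑ A ∈ C, (degE ends C A).card
      = ∑ e ∈ rCutEdges ends C, (C.filter (fun A => ∃ z ∈ ends e, z ∈ A)).card := by
    simp only [degE, Finset.card_filter]
    exact Finset.sum_comm
  rw [hswap]
  have h2 : ∀ e ∈ rCutEdges ends C, (C.filter (fun A => ∃ z ∈ ends e, z ∈ A)).card = 2 := by
    intro e he
    have hcross : rCrosses ends C e := by
      simpa [rCutEdges] using he
    obtain ⟨Ax, Ay, _, _, hne, hfil⟩ := crossing_filter_pair ends hC hcross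
    rw [hfil, Finset.card_pair hne]
  rw [Finset.sum_congr rfl h2, Finset.sum_const, smul_eq_mul, rCutValue, mul_comm]

lemma cut_le_degsum (ends : E → Sym2 V) {C : Finset (Finset V)} {k r : ℕ}
    (hC : IsPartitionInto C k) (hr : 2 ≤ r) (hrk : r ≤ k) {D : Finset (Finset V)}
    (hDC : D ⊆ C) (hDcard : D.card = r - 1) :
    ∃ P0 : Finset (Finset V), IsPartitionInto P0 r ∧
      rCutValue ends P0 ≤ ∑ A ∈ D, (degE ends C A).card := by
  classical
  set R := (C \ D).sup id with hR
  have hCDne : (C \ D).Nonempty := by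
    rw [← Finset.card_pos, Finset.card_sdiff_of_subset hDC, hC.1]; omega
  obtain ⟨A', hA'⟩ := hCDne
  have hA'C : A' ∈ C := (Finset.mem_sdiff.mp hA').1
  have hA'R : A' ⊆ R := Finset.le_iff_subset.mp (Finset.le_sup (f := id) hA')
  obtain ⟨x', hx'⟩ := hC.2.1 A' hA'C
  have hRD : R ∉ D := by
    intro hRD
    have hA'ne : A' ≠ R := by
      intro hcon
      exact (Finset.mem_sdiff.mp hA').2 (hcon ▸ hRD)
    have hdisj := hC.2.2.1 A' hA'C R (hDC hRD) hA'ne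
    exact Finset.disjoint_left.mp hdisj hx' (hA'R hx')
  have hmemP0 : ∀ A, A ∈ insert R D ↔ (A = R ∨ A ∈ D) := fun A => Finset.mem_insert
  have hcoarser : Coarser C (insert R D) := by
    intro A hA
    by_cases hAD : A ∈ D
    · exact ⟨A, Finset.mem_insert_of_mem hAD, le_refl A⟩
    · refine ⟨R, Finset.mem_insert_self _ _, ?_⟩
      exact Finset.le_iff_subset.mp (Finset.le_sup (f := id) (Finset.mem_sdiff.mpr ⟨hA, hAD⟩))
  have hpart : IsPartitionInto (insert R D) r := by
    refine ⟨?_, ?_, ?_, ?_⟩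
    · rw [Finset.card_insert_of_notMem hRD, hDcard]; omega
    · intro A hA
      rcases (hmemP0 A).mp hA with h | h
      · exact ⟨x', h ▸ hA'R hx'⟩
      · exact hC.2.1 A (hDC h)
    · intro A hA B hB hAB
      have hdisjR : ∀ B' ∈ D, Disjoint R B' := by
        intro B' hB'
        rw [hR, Finset.disjoint_left]   -- Disjoint (sup) B'
        intro z hz hzB'
        obtain ⟨A'', hA'', hzA''⟩ := Finset.mem_sup.mp hz
        have hA''C : A'' ∈ C := (Finset.mem_sdiff.mp hA'').1
        have hne : A'' ≠ B' := by
          intro hcon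
          exact (Finset.mem_sdiff.mp hA'').2 (hcon ▸ hB')
        exact Finset.disjoint_left.mp (hC.2.2.1 A'' hA''C B' (hDC hB') hne) hzA'' hzB'
      rcases (hmemP0 A).mp hA with h1 | h1 <;> rcases (hmemP0 B).mp hB with h2 | h2
      · exact absurd (h1.trans h2.symm) hAB
      · exact h1 ▸ hdisjR B h2
      · exact h2 ▸ (hdisjR A h1).symm
      · exact hC.2.2.1 A (hDC h1) B (hDC h2) hAB
    · intro z
      obtain ⟨A, hA, hz⟩ := hC.2.2.2 z
      obtain ⟨B, hB, hAB⟩ := hcoarser A hA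
      exact ⟨B, hB, hAB hz⟩
  refine ⟨insert R D, hpart, ?_⟩
  have hsub : rCutEdges ends (insert R D) ⊆ D.biUnion (fun A => degE ends C A) := by
    intro e he'
    have heC : e ∈ rCutEdges ends C := cutEdges_subset_of_coarser ends hcoarser he'
    have hcross : rCrosses ends (insert R D) e := by simpa [rCutEdges] using he'
    by_cases htouch : ∃ A ∈ D, ∃ z ∈ ends e, z ∈ A
    · obtain ⟨A, hA, z, hz, hzA⟩ := htouch
      exact Finset.mem_biUnion.mpr ⟨A, hA, Finset.mem_filter.mpr ⟨heC, z, hz, hzA⟩⟩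
    · push_neg at htouch
      exfalso
      apply hcross
      refine ⟨R, Finset.mem_insert_self _ _, fun z hz => ?_⟩
      obtain ⟨Az, hAz, hzAz⟩ := hC.2.2.2 z
      have hAzD : Az ∉ D := by
        intro hcon
        exact htouch Az hcon z hz hzAz
      exact Finset.le_sup (f := id) (Finset.mem_sdiff.mpr ⟨hAz, hAzD⟩) hzAz
  calc rCutValue ends (insert R D) ≤ (D.biUnion (fun A => degE ends C A)).card :=
        Finset.card_le_card hsub
    _ ≤ ∑ A ∈ D, (degE ends C A).card := Finset.card_biUnion_le

lemma m_lower (ends : E → Sym2 V) {C : Finset (Finset V)} {k r cr : ℕ}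
    (hC : IsPartitionInto C k) (hr : 2 ≤ r) (hrk : r ≤ k)
    (hmin : ∀ P : Finset (Finset V), IsPartitionInto P r → cr ≤ rCutValue ends P) :
    cr * k ≤ 2 * (r-1) * rCutValue ends C := by
  obtain ⟨D, hDC, hDcard, hDsum⟩ := exists_small_subset C
    (fun A => (degE ends C A).card) (r-1) (by rw [hC.1]; omega)
  obtain ⟨P0, hP0, hP0val⟩ := cut_le_degsum ends hC hr hrk hDC hDcard
  have h1 : cr ≤ ∑ A ∈ D, (degE ends C A).card := le_trans (hmin P0 hP0) hP0val
  have h2 : ∑ A ∈ C, (degE ends C A).card = 2 * rCutValue ends C := sum_degE ends hC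
  calc cr * k ≤ (∑ A ∈ D, (degE ends C A).card) * k := Nat.mul_le_mul_right k h1
    _ = C.card * ∑ A ∈ D, (degE ends C A).card := by rw [hC.1, mul_comm]
    _ ≤ (r-1) * ∑ A ∈ C, (degE ends C A).card := hDsum
    _ = (r-1) * (2 * rCutValue ends C) := by rw [h2]
    _ = 2 * (r-1) * rCutValue ends C := by ring


lemma ratio_rpow {k1 s t : ℝ} (hs : 0 < s) (hst : s ≤ t) (htk : t + 1 ≤ k1) :
    k1 / (k1 - s) ≤ (k1 / (k1 - t)) ^ (s/t) := by
  have ht : 0 < t := lt_of_lt_of_le hs hst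
  have hk1 : 0 < k1 := by linarith
  have hk1t : 0 < k1 - t := by linarith
  have hk1s : 0 < k1 - s := by linarith
  set θ := s / t with hθdef
  have hθ0 : 0 < θ := div_pos hs ht
  have hθ1 : θ ≤ 1 := by rw [hθdef, div_le_one ht]; exact hst
  set a := (k1 - t) / k1 with hadef
  have ha0 : 0 ≤ a := le_of_lt (div_pos hk1t hk1)
  have hgm := Real.geom_mean_le_arith_mean2_weighted hθ0.le (by linarith : (0:ℝ) ≤ 1 - θ)
    ha0 (zero_le_one) (by ring : θ + (1 - θ) = 1)
  simp only [Real.one_rpow, mul_one] at hgm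
  -- hgm : a ^ θ ≤ θ * a + (1 - θ)
  have harith : θ * a + (1 - θ) = (k1 - s) / k1 := by
    rw [hθdef, hadef]
    field_simp
    ring
  rw [harith] at hgm
  have haθpos : 0 < a ^ θ := Real.rpow_pos_of_pos (div_pos hk1t hk1) θ
  have hinv : ((k1 - s)/k1)⁻¹ ≤ (a ^ θ)⁻¹ := by
    apply inv_anti₀ haθpos hgm
  calc k1 / (k1 - s) = ((k1 - s)/k1)⁻¹ := by rw [inv_div]
    _ ≤ (a ^ θ)⁻¹ := hinv
    _ = (a⁻¹) ^ θ := (Real.inv_rpow ha0 θ).symm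
    _ = (k1 / (k1 - t)) ^ θ := by rw [hadef, inv_div]

variable {V E : Type} [Fintype V] [DecidableEq V] [Fintype E]

lemma one_le_prod_real {t : ℕ} {f : ℕ → ℝ} (h : ∀ j ∈ Finset.range t, 1 ≤ f j) :
    1 ≤ ∏ j ∈ Finset.range t, f j := by
  induction t with
  | zero => simp
  | succ n ih =>
    rw [Finset.prod_range_succ]
    have h1 := ih (fun j hj => h j (by rw [Finset.mem_range] at *; omega))
    have h2 := h n (Finset.mem_range.mpr (by omega))
    nlinarith

lemma cuts_card_induct (ends : E → Sym2 V) {r cr T t : ℕ} {s : ℝ}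
    (hr : 2 ≤ r) (hcr : 1 ≤ cr) (hT : cr ≤ T)
    (hmin : ∀ P : Finset (Finset V), IsPartitionInto P r → cr ≤ rCutValue ends P)
    (hs_def : s = 2*((r:ℝ)-1)*T/cr)
    (hst : s ≤ (t:ℝ)) (hrt : r ≤ t) :
    ∀ (d : ℕ) (C : Finset (Finset V)), IsPartitionInto C (t + d) →
      ((cuts ends r T C).card : ℝ)
        ≤ (r:ℝ)^(t-1) * (∏ j ∈ Finset.range t, (((t + d : ℕ):ℝ) - (j:ℝ))) ^ (s/(t:ℝ)) := by
  have hr1 : (1:ℝ) ≤ (r:ℝ) - 1 := by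
    have : (2:ℝ) ≤ (r:ℝ) := by exact_mod_cast hr
    linarith
  have hcr0 : (0:ℝ) < (cr:ℝ) := by exact_mod_cast hcr
  have hT0 : (0:ℝ) < (T:ℝ) := by
    have : (1:ℕ) ≤ T := le_trans hcr hT
    exact_mod_cast this
  have hs0 : 0 < s := by rw [hs_def]; positivity
  have ht0 : 0 < t := by omega
  have ht0R : (0:ℝ) < (t:ℝ) := by exact_mod_cast ht0
  have hs_mul : s * cr = 2*((r:ℝ)-1)*T := by
    rw [hs_def]; field_simp
  intro d
  induction d with
  | zero =>
    intro C hC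
    have hbase := cuts_card_base ends (r := r) (T := T) (by omega : 1 ≤ r) hC (by omega : 1 ≤ t + 0)
    have hprod1 : (1:ℝ) ≤ ∏ j ∈ Finset.range t, (((t + 0 : ℕ):ℝ) - (j:ℝ)) := by
      apply one_le_prod_real
      intro j hj
      have hjt : j < t := Finset.mem_range.mp hj
      have hle : (j:ℝ) + 1 ≤ (t:ℝ) := by exact_mod_cast hjt
      push_cast
      linarith
    have hrp1 : (1:ℝ) ≤ (∏ j ∈ Finset.range t, (((t + 0 : ℕ):ℝ) - (j:ℝ))) ^ (s/(t:ℝ)) := by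
      have := Real.rpow_le_rpow (zero_le_one) hprod1 (by positivity : (0:ℝ) ≤ s/(t:ℝ))
      rwa [Real.one_rpow] at this
    calc ((cuts ends r T C).card : ℝ) ≤ ((r:ℝ))^(t-1) := by
          exact_mod_cast hbase
      _ = ((r:ℝ))^(t-1) * 1 := by ring
      _ ≤ _ := by
          apply mul_le_mul_of_nonneg_left hrp1 (by positivity)
  | succ d ih =>
    intro C hC
    obtain ⟨k, hk⟩ : ∃ k, k = t + d := ⟨_, rfl⟩
    have hCk : IsPartitionInto C (k+1) := by rw [hk]; exact hC
    have hk1cast : ((t + (d+1) : ℕ):ℝ) = (k:ℝ) + 1 := by rw [hk]; push_cast; ring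
    have hkcast : ((t + d : ℕ):ℝ) = (k:ℝ) := by rw [hk]
    obtain ⟨k1, hk1def⟩ : ∃ k1 : ℝ, k1 = (k:ℝ) + 1 := ⟨_, rfl⟩
    rw [← hk1def] at hk1cast
    have htk : (t:ℝ) ≤ (k:ℝ) := by
      have : t ≤ k := by omega
      exact_mod_cast this
    -- min cut degree bound
    have hmlow := m_lower ends hCk hr (by omega : r ≤ k + 1) hmin
    obtain ⟨m, hm⟩ : ∃ m, m = rCutValue ends C := ⟨_, rfl⟩
    rw [← hm] at hmlow
    have hmlowR : (cr:ℝ) * k1 ≤ 2*((r:ℝ)-1)*(m:ℝ) := by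
      have h := (Nat.cast_le (α := ℝ)).mpr hmlow
      push_cast [Nat.cast_sub (show 1 ≤ r by omega)] at h
      rw [hk1def]
      push_cast
      linarith
    have hsk1 : s < k1 := by rw [hk1def]; linarith
    have hTm : (T:ℝ) < (m:ℝ) := by
      have h1 : (cr:ℝ) * s < (cr:ℝ) * k1 := by
        exact mul_lt_mul_of_pos_left hsk1 hcr0
      have h2 : 2*((r:ℝ)-1)*(T:ℝ) < 2*((r:ℝ)-1)*(m:ℝ) := by nlinarith [hs_mul]
      have h2r : (0:ℝ) < 2*((r:ℝ)-1) := by linarith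
      exact lt_of_mul_lt_mul_left h2 h2r.le
    have hTmN : T < m := by exact_mod_cast hTm
    -- pairs inequality
    have hpairs := cuts_pairs ends (r := r) (T := T) (show 1 ≤ k by omega) hCk
    rw [← hm] at hpairs
    have hIH : ∀ e ∈ rCutEdges ends C,
        ((cuts ends r T (mergeEdge ends C e)).card : ℝ)
          ≤ (r:ℝ)^(t-1) * (∏ j ∈ Finset.range t, ((k:ℝ) - (j:ℝ))) ^ (s/(t:ℝ)) := by
      intro e he
      have hcross : rCrosses ends C e := by simpa [rCutEdges] using he
      have hmerge := (mergeEdge_spec ends (show 1 ≤ k by omega) hCk hcross).1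
      rw [hk] at hmerge
      have := ih (mergeEdge ends C e) hmerge
      rwa [hkcast] at this
    obtain ⟨G, hG⟩ : ∃ G : ℝ, G = (r:ℝ)^(t-1) * (∏ j ∈ Finset.range t, ((k:ℝ) - (j:ℝ))) ^ (s/(t:ℝ)) := ⟨_, rfl⟩
    rw [← hG] at hIH
    have hPk_pos : (0:ℝ) < ∏ j ∈ Finset.range t, ((k:ℝ) - (j:ℝ)) := by
      apply Finset.prod_pos
      intro j hj
      have hjt : j < t := Finset.mem_range.mp hj
      have : (j:ℝ) + 1 ≤ (t:ℝ) := by exact_mod_cast hjt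
      linarith
    have hGpos : 0 < G := by
      rw [hG]
      apply mul_pos (by positivity) (Real.rpow_pos_of_pos hPk_pos _)
    -- cast pairs inequality
    have hXm : ((cuts ends r T C).card : ℝ) * ((m:ℝ) - (T:ℝ)) ≤ (m:ℝ) * G := by
      have hc1 : (((cuts ends r T C).card * (m - T) : ℕ) : ℝ)
          ≤ ((∑ e ∈ rCutEdges ends C, (cuts ends r T (mergeEdge ends C e)).card : ℕ) : ℝ) := by
        exact_mod_cast hpairs
      have hc2 : (((cuts ends r T C).card * (m - T) : ℕ) : ℝ)
          = ((cuts ends r T C).card : ℝ) * ((m:ℝ) - (T:ℝ)) := by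
        push_cast [Nat.cast_sub hTmN.le]
        ring
      have hc3 : ((∑ e ∈ rCutEdges ends C, (cuts ends r T (mergeEdge ends C e)).card : ℕ) : ℝ)
          ≤ (m:ℝ) * G := by
        push_cast
        calc ∑ e ∈ rCutEdges ends C, ((cuts ends r T (mergeEdge ends C e)).card : ℝ)
            ≤ ∑ _e ∈ rCutEdges ends C, G := Finset.sum_le_sum hIH
          _ = (m:ℝ) * G := by
              rw [Finset.sum_const, nsmul_eq_mul, hm]
              rfl
      rw [hc2] at hc1
      exact le_trans hc1 hc3
    -- divide
    have hmT : (0:ℝ) < (m:ℝ) - T := by linarith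
    have hX1 : ((cuts ends r T C).card : ℝ) ≤ ((m:ℝ) / ((m:ℝ) - T)) * G := by
      rw [div_mul_eq_mul_div, le_div_iff₀ hmT]
      exact hXm
    -- ratio bound
    have hcrossineq : k1 * (T:ℝ) ≤ (m:ℝ) * s := by
      have h2 := mul_le_mul_of_nonneg_right hmlowR hT0.le
      have e1 : (m:ℝ)*s*(cr:ℝ) = 2*((r:ℝ)-1)*(m:ℝ)*(T:ℝ) := by
        calc (m:ℝ)*s*(cr:ℝ) = (m:ℝ)*(s*(cr:ℝ)) := by ring
          _ = (m:ℝ)*(2*((r:ℝ)-1)*(T:ℝ)) := by rw [hs_mul]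
          _ = 2*((r:ℝ)-1)*(m:ℝ)*(T:ℝ) := by ring
      have h3 : (cr:ℝ) * (k1*(T:ℝ)) ≤ (cr:ℝ) * ((m:ℝ)*s) := by
        ring_nf
        ring_nf at h2 e1
        linarith [h2, e1]
      exact le_of_mul_le_mul_left h3 hcr0
    have hk1s : (0:ℝ) < k1 - s := by linarith
    have hratio : (m:ℝ) / ((m:ℝ) - T) ≤ k1 / (k1 - s) := by
      rw [div_le_div_iff₀ hmT hk1s]
      ring_nf
      ring_nf at hcrossineq
      linarith [hcrossineq]
    have hX2 : ((cuts ends r T C).card : ℝ) ≤ (k1 / (k1 - s)) * G := by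
      calc ((cuts ends r T C).card : ℝ) ≤ ((m:ℝ) / ((m:ℝ) - T)) * G := hX1
        _ ≤ (k1 / (k1 - s)) * G := mul_le_mul_of_nonneg_right hratio hGpos.le
    -- product telescoping
    have hk1t : (0:ℝ) < k1 - t := by rw [hk1def]; linarith
    have hk1pos : (0:ℝ) < k1 := by rw [hk1def]; positivity
    have hprodtel : ∏ j ∈ Finset.range t, (k1 - (j:ℝ))
        = (k1 / (k1 - (t:ℝ))) * ∏ j ∈ Finset.range t, ((k:ℝ) - (j:ℝ)) := by
      have h1 := Finset.prod_range_succ (fun j => k1 - (j:ℝ)) t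
      have h2 := Finset.prod_range_succ' (fun j => k1 - (j:ℝ)) t
      have h3 : ∏ j ∈ Finset.range t, (k1 - (((j:ℕ)+1 : ℕ):ℝ))
          = ∏ j ∈ Finset.range t, ((k:ℝ) - (j:ℝ)) := by
        apply Finset.prod_congr rfl
        intro j _
        push_cast
        rw [hk1def]
        ring
      rw [h3] at h2
      have h4 : (∏ j ∈ Finset.range t, (k1 - (j:ℝ))) * (k1 - (t:ℝ))
          = (∏ j ∈ Finset.range t, ((k:ℝ) - (j:ℝ))) * k1 := by
        rw [← h1, h2]
        norm_num
      field_simp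
      linear_combination h4
    have hfin : (k1 / (k1 - s)) * G
        ≤ (r:ℝ)^(t-1) * (∏ j ∈ Finset.range t, (k1 - (j:ℝ))) ^ (s/(t:ℝ)) := by
      rw [hprodtel, Real.mul_rpow (le_of_lt (div_pos hk1pos hk1t)) hPk_pos.le, hG]
      have hrr := ratio_rpow (k1 := k1) (s := s) (t := (t:ℝ)) hs0 hst (by rw [hk1def]; linarith)
      calc (k1 / (k1 - s)) * ((r:ℝ)^(t-1) * (∏ j ∈ Finset.range t, ((k:ℝ) - (j:ℝ))) ^ (s/(t:ℝ)))
          ≤ (k1 / (k1 - (t:ℝ))) ^ (s/(t:ℝ))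
            * ((r:ℝ)^(t-1) * (∏ j ∈ Finset.range t, ((k:ℝ) - (j:ℝ))) ^ (s/(t:ℝ))) := by
            apply mul_le_mul_of_nonneg_right hrr
              (mul_nonneg (by positivity) (Real.rpow_nonneg hPk_pos.le _))
        _ = (r:ℝ)^(t-1) * ((k1 / (k1 - (t:ℝ))) ^ (s/(t:ℝ))
            * (∏ j ∈ Finset.range t, ((k:ℝ) - (j:ℝ))) ^ (s/(t:ℝ))) := by ring
    have hgoalcast : ∏ j ∈ Finset.range t, (((t + (d+1) : ℕ):ℝ) - (j:ℝ))
        = ∏ j ∈ Finset.range t, (k1 - (j:ℝ)) := by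
      apply Finset.prod_congr rfl
      intro j _
      rw [hk1cast]
    rw [hgoalcast]
    exact le_trans hX2 hfin

variable {V E : Type} [Fintype V] [DecidableEq V] [Fintype E]

lemma count_main (ends : E → Sym2 V) {r cr : ℕ} (hr : 2 ≤ r) (hcr : 1 ≤ cr)
    (hmin : ∀ P : Finset (Finset V), IsPartitionInto P r → cr ≤ rCutValue ends P)
    (hn : 1 ≤ Fintype.card V) (T : ℕ) (hT : cr ≤ T) :
    ((Finset.univ.filter (fun P : Finset (Finset V) =>
        IsPartitionInto P r ∧ rCutValue ends P ≤ T)).card : ℝ)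
      ≤ ((r * Fintype.card V : ℕ) : ℝ) ^ (2*((r:ℝ)-1)*(T:ℝ)/(cr:ℝ)) := by
  classical
  obtain ⟨n, hn_def⟩ : ∃ n, n = Fintype.card V := ⟨_, rfl⟩
  rw [← hn_def] at hn ⊢
  have hr2R : (2:ℝ) ≤ (r:ℝ) := by exact_mod_cast hr
  have hr1 : (1:ℝ) ≤ (r:ℝ) - 1 := by linarith
  have hcr0 : (0:ℝ) < (cr:ℝ) := by exact_mod_cast hcr
  have hT1 : 1 ≤ T := le_trans hcr hT
  have hT0 : (0:ℝ) < (T:ℝ) := by exact_mod_cast hT1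
  have hTcr : (cr:ℝ) ≤ (T:ℝ) := by exact_mod_cast hT
  obtain ⟨s, hs_def⟩ : ∃ s:ℝ, s = 2*((r:ℝ)-1)*(T:ℝ)/(cr:ℝ) := ⟨_, rfl⟩
  rw [← hs_def]
  have hs0 : 0 < s := by rw [hs_def]; positivity
  have hsr : (r:ℝ) ≤ s := by
    have h1 : 2*((r:ℝ)-1) ≤ s := by
      rw [hs_def, le_div_iff₀ hcr0]
      nlinarith
    linarith
  obtain ⟨t, ht_def⟩ : ∃ t, t = ⌈s⌉₊ := ⟨_, rfl⟩
  have hst : s ≤ (t:ℝ) := by rw [ht_def]; exact Nat.le_ceil s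
  have hrt : r ≤ t := by
    have : (r:ℝ) ≤ (t:ℝ) := le_trans hsr hst
    exact_mod_cast this
  have ht1 : ((t:ℕ):ℝ) - 1 ≤ s := by
    have h := Nat.ceil_lt_add_one hs0.le
    rw [← ht_def] at h
    linarith
  obtain ⟨C0, hC0_def⟩ : ∃ C0 : Finset (Finset V),
      C0 = Finset.univ.image (fun x : V => ({x} : Finset V)) := ⟨_, rfl⟩
  have hC0 : IsPartitionInto C0 n := by
    refine ⟨?_, ?_, ?_, ?_⟩
    · rw [hC0_def, Finset.card_image_of_injective _ Finset.singleton_injective,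
        Finset.card_univ, hn_def]
    · intro A hA
      obtain ⟨x, _, rfl⟩ := Finset.mem_image.mp (hC0_def ▸ hA)
      exact ⟨x, Finset.mem_singleton_self x⟩
    · intro A hA B hB hAB
      obtain ⟨x, _, rfl⟩ := Finset.mem_image.mp (hC0_def ▸ hA)
      obtain ⟨y, _, rfl⟩ := Finset.mem_image.mp (hC0_def ▸ hB)
      rw [Finset.disjoint_left]
      intro z hz hz'
      rw [Finset.mem_singleton] at hz hz'
      apply hAB
      rw [hz] at hz'
      rw [hz']
    · intro x
      exact ⟨{x}, hC0_def ▸ Finset.mem_image_of_mem _ (Finset.mem_univ x),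
        Finset.mem_singleton_self x⟩
  have hfilter_eq : Finset.univ.filter (fun P : Finset (Finset V) =>
      IsPartitionInto P r ∧ rCutValue ends P ≤ T) = cuts ends r T C0 := by
    ext P
    simp only [Finset.mem_filter, Finset.mem_univ, true_and, mem_cuts_iff]
    constructor
    · rintro ⟨h1, h2⟩
      refine ⟨h1, h2, ?_⟩
      intro A hA
      obtain ⟨x, _, rfl⟩ := Finset.mem_image.mp (hC0_def ▸ hA)
      obtain ⟨B, hB, hxB⟩ := h1.2.2.2 x
      exact ⟨B, hB, Finset.singleton_subset_iff.mpr hxB⟩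
    · rintro ⟨h1, h2, _⟩
      exact ⟨h1, h2⟩
  rw [hfilter_eq]
  have hQcast : ((r * n : ℕ):ℝ) = (r:ℝ) * (n:ℝ) := by push_cast; ring
  have hn0R : (0:ℝ) < (n:ℝ) := by exact_mod_cast hn
  have hr0R : (0:ℝ) < (r:ℝ) := by linarith
  have hrn : (r:ℝ) * (n:ℝ) ≠ 0 ∨ True := Or.inr trivial
  by_cases hcase : t ≤ n
  · obtain ⟨d, hd⟩ : ∃ d, n = t + d := ⟨n - t, by omega⟩
    have hC0' : IsPartitionInto C0 (t + d) := by rw [← hd]; exact hC0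
    have hbound := cuts_card_induct ends hr hcr hT hmin hs_def hst hrt d C0 hC0'
    have hprod_nonneg : ∀ j ∈ Finset.range t, (0:ℝ) ≤ ((t + d : ℕ):ℝ) - (j:ℝ) := by
      intro j hj
      have hjt : j < t := Finset.mem_range.mp hj
      have : (j:ℝ) < ((t + d : ℕ):ℝ) := by
        have : j < t + d := by omega
        exact_mod_cast this
      linarith
    have hprod_le : ∏ j ∈ Finset.range t, (((t+d:ℕ):ℝ) - (j:ℝ)) ≤ (n:ℝ)^(t:ℕ) := by
      calc ∏ j ∈ Finset.range t, (((t+d:ℕ):ℝ) - (j:ℝ))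
          ≤ ∏ _j ∈ Finset.range t, (n:ℝ) := by
            apply Finset.prod_le_prod hprod_nonneg
            intro j _
            have : ((t+d:ℕ):ℝ) = (n:ℝ) := by rw [hd]
            rw [this]
            have : (0:ℝ) ≤ (j:ℝ) := Nat.cast_nonneg j
            linarith
        _ = (n:ℝ)^(t:ℕ) := by rw [Finset.prod_const, Finset.card_range]
    have hrp : (∏ j ∈ Finset.range t, (((t+d:ℕ):ℝ) - (j:ℝ))) ^ (s/(t:ℝ))
        ≤ ((n:ℝ)^(t:ℕ)) ^ (s/(t:ℝ)) :=
      Real.rpow_le_rpow (Finset.prod_nonneg hprod_nonneg) hprod_le (by positivity)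
    have ht0R : (0:ℝ) < (t:ℝ) := by
      have : 0 < t := by omega
      exact_mod_cast this
    have hnp : ((n:ℝ)^(t:ℕ)) ^ (s/(t:ℝ)) = (n:ℝ) ^ s := by
      rw [← Real.rpow_natCast (n:ℝ) t, ← Real.rpow_mul hn0R.le]
      congr 1
      field_simp
    have hrpow : ((r:ℝ))^(t-1:ℕ) ≤ (r:ℝ) ^ s := by
      rw [← Real.rpow_natCast (r:ℝ) (t-1)]
      apply Real.rpow_le_rpow_of_exponent_le (by linarith)
      have hcast : ((t-1:ℕ):ℝ) = (t:ℝ) - 1 := by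
        have h1t : 1 ≤ t := by omega
        push_cast [Nat.cast_sub h1t]
        ring
      rw [hcast]
      exact ht1
    calc ((cuts ends r T C0).card : ℝ)
        ≤ (r:ℝ)^(t-1) * (∏ j ∈ Finset.range t, (((t+d:ℕ):ℝ) - (j:ℝ))) ^ (s/(t:ℝ)) := hbound
      _ ≤ (r:ℝ)^s * (n:ℝ)^s := by
          apply mul_le_mul hrpow (le_trans hrp (le_of_eq hnp))
            (Real.rpow_nonneg (Finset.prod_nonneg hprod_nonneg) _)
            (Real.rpow_nonneg hr0R.le _)
      _ = ((r * n : ℕ):ℝ) ^ s := by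
          rw [hQcast, Real.mul_rpow hr0R.le hn0R.le]
  · push_neg at hcase
    have hns : (n:ℝ) < s := by
      rw [ht_def] at hcase
      exact Nat.lt_ceil.mp hcase
    have hbase := cuts_card_base ends (r := r) (T := T) (by omega : 1 ≤ r) hC0 hn
    calc ((cuts ends r T C0).card : ℝ) ≤ ((r:ℝ))^(n-1:ℕ) := by exact_mod_cast hbase
      _ ≤ (r:ℝ) ^ s := by
          rw [← Real.rpow_natCast (r:ℝ) (n-1)]
          apply Real.rpow_le_rpow_of_exponent_le (by linarith)
          have : ((n-1:ℕ):ℝ) ≤ (n:ℝ) := by exact_mod_cast Nat.sub_le n 1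
          linarith
      _ ≤ ((r * n : ℕ):ℝ) ^ s := by
          rw [hQcast]
          apply Real.rpow_le_rpow hr0R.le ?_ hs0.le
          nlinarith [mul_le_mul_of_nonneg_left (show (1:ℝ) ≤ (n:ℝ) by exact_mod_cast hn) hr0R.le]
end S9

set_option maxHeartbeats 2000000 in
/-- Let `G` be a connected multigraph on `n ≥ 2` vertices, `r` an integer with
`2 ≤ r ≤ n`, and `cr` its minimum `r`-way cut value.  If each edge fails independently with
probability `p ∈ [0,1]` where `p ^ cr = (r n) ^ (-(2+δ)(r-1))` for some `δ > 0`, then for every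
real `α ≥ 1` the probability that some `r`-way cut of value at least `α * cr` fails (all edges
of its edge set fail) is at most `(r n) ^ (-α δ (r-1)) * (1 + 2/δ)`. -/
theorem stmt9 {V E : Type} [Fintype V] [DecidableEq V] [Fintype E]
    (ends : E → Sym2 V) (hnd : ∀ e, ¬ (ends e).IsDiag)
    (hn : 2 ≤ Fintype.card V)
    (hconn : (survGraph ends (∅ : Finset E)).Connected)
    (r : ℕ) (hr2 : 2 ≤ r) (hrn : r ≤ Fintype.card V)
    (cr : ℕ)
    (hmin : ∀ P : Finset (Finset V), IsPartitionInto P r → cr ≤ rCutValue ends P)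
    (hex : ∃ P : Finset (Finset V), IsPartitionInto P r ∧ rCutValue ends P = cr)
    (p δ : ℝ) (hp0 : 0 ≤ p) (hp1 : p ≤ 1) (hδ : 0 < δ)
    (hpc : p ^ cr = ((r * Fintype.card V : ℕ) : ℝ) ^ (-((2 + δ) * ((r : ℝ) - 1))))
    (α : ℝ) (hα : 1 ≤ α) :
    failurePr p (Finset.univ.filter (fun F : Finset E =>
        ∃ P : Finset (Finset V), IsPartitionInto P r ∧
          α * cr ≤ (rCutValue ends P : ℝ) ∧ rCutEdges ends P ⊆ F))
      ≤ ((r * Fintype.card V : ℕ) : ℝ) ^ (-(α * δ * ((r : ℝ) - 1))) * (1 + 2 / δ) := by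

  classical
  have hn1 : 1 ≤ Fintype.card V := by omega
  obtain ⟨Q, hQ_def⟩ : ∃ Q : ℝ, Q = ((r * Fintype.card V : ℕ) : ℝ) := ⟨_, rfl⟩
  rw [← hQ_def] at hpc ⊢
  have hQ4 : (4:ℝ) ≤ Q := by
    rw [hQ_def]
    have h4 : (4:ℕ) ≤ r * Fintype.card V := by
      calc (4:ℕ) = 2*2 := rfl
        _ ≤ r * Fintype.card V := Nat.mul_le_mul hr2 hn
    exact_mod_cast h4
  have hQ1 : (1:ℝ) < Q := by linarith
  have hQ0 : (0:ℝ) < Q := by linarith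
  have hr2R : (2:ℝ) ≤ (r:ℝ) := by exact_mod_cast hr2
  have hexp_neg : -((2+δ)*((r:ℝ)-1)) < 0 := by nlinarith
  have hRlt1 : Q ^ (-((2+δ)*((r:ℝ)-1))) < 1 := Real.rpow_lt_one_of_one_lt_of_neg hQ1 hexp_neg
  have hR0 : (0:ℝ) < Q ^ (-((2+δ)*((r:ℝ)-1))) := Real.rpow_pos_of_pos hQ0 _
  have hcr1 : 1 ≤ cr := by
    by_contra h
    have hcr0 : cr = 0 := by omega
    rw [hcr0, pow_zero] at hpc
    rw [← hpc] at hRlt1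
    exact lt_irrefl 1 hRlt1
  have hcrR : (0:ℝ) < (cr:ℝ) := by exact_mod_cast hcr1
  have hp_lt1 : p < 1 := by
    rcases eq_or_lt_of_le hp1 with h | h
    · exfalso
      rw [h, one_pow] at hpc
      rw [← hpc] at hRlt1
      exact lt_irrefl 1 hRlt1
    · exact h
  have hp_pos : 0 < p := by
    rcases eq_or_lt_of_le hp0 with h | h
    · exfalso
      rw [← h, zero_pow (by omega : cr ≠ 0)] at hpc
      rw [← hpc] at hR0
      exact lt_irrefl 0 hR0
    · exact h
  have hp_eq : p = Q ^ (-((2+δ)*((r:ℝ)-1)) / (cr:ℝ)) := by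
    have h4 : (p ^ ((cr:ℕ):ℝ)) ^ ((cr:ℝ)⁻¹) = p := by
      rw [← Real.rpow_mul hp0, mul_inv_cancel₀ hcrR.ne', Real.rpow_one]
    have h2 : p ^ ((cr:ℕ):ℝ) = Q ^ (-((2+δ)*((r:ℝ)-1))) := by
      rw [Real.rpow_natCast]; exact hpc
    have h5 : (Q ^ (-((2+δ)*((r:ℝ)-1)))) ^ ((cr:ℝ)⁻¹)
        = Q ^ (-((2+δ)*((r:ℝ)-1)) / (cr:ℝ)) := by
      rw [← Real.rpow_mul hQ0.le, div_eq_mul_inv]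
    rw [← h4, h2, h5]
  have hp_pow : ∀ v : ℕ, p ^ v = Q ^ ((-((2+δ)*((r:ℝ)-1)) / (cr:ℝ)) * (v:ℝ)) := by
    intro v
    rw [hp_eq, ← Real.rpow_natCast (Q ^ (-((2+δ)*((r:ℝ)-1)) / (cr:ℝ))) v,
      ← Real.rpow_mul hQ0.le]
  obtain ⟨S, hS_def⟩ : ∃ S : Finset (Finset (Finset V)), S = Finset.univ.filter
      (fun P => IsPartitionInto P r ∧ α * cr ≤ (rCutValue ends P : ℝ)) := ⟨_, rfl⟩
  have hmemS : ∀ P, P ∈ S ↔ (IsPartitionInto P r ∧ α * (cr:ℝ) ≤ (rCutValue ends P : ℝ)) := by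
    intro P; rw [hS_def]; simp
  have hfe : (Finset.univ.filter (fun F : Finset E =>
      ∃ P : Finset (Finset V), IsPartitionInto P r ∧ α * cr ≤ (rCutValue ends P : ℝ)
        ∧ rCutEdges ends P ⊆ F))
      = (Finset.univ.filter (fun F : Finset E => ∃ P ∈ S, rCutEdges ends P ⊆ F)) := by
    ext F
    simp only [Finset.mem_filter, Finset.mem_univ, true_and]
    constructor
    · rintro ⟨P, h1, h2, h3⟩
      exact ⟨P, (hmemS P).mpr ⟨h1, h2⟩, h3⟩
    · rintro ⟨P, hP, h3⟩
      obtain ⟨h1, h2⟩ := (hmemS P).mp hP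
      exact ⟨P, h1, h2, h3⟩
  rw [hfe]
  have hub := S9.union_bound p hp0 hp1 S (fun P => rCutEdges ends P)
  apply le_trans hub
  obtain ⟨y, hy_def⟩ : ∃ y : Finset (Finset V) → ℝ,
      y = fun P => Q ^ (2*((r:ℝ)-1)*((rCutValue ends P : ℕ):ℝ)/(cr:ℝ)) := ⟨_, rfl⟩
  have hθ : 0 < δ/2 := by linarith
  have hsum_eq : ∀ P ∈ S, p ^ (rCutEdges ends P).card = (y P) ^ (-(1+δ/2)) := by
    intro P _
    rw [hy_def]
    simp only
    rw [show rCutValue ends P = (rCutEdges ends P).card from rfl]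
    rw [hp_pow (rCutEdges ends P).card]
    rw [← Real.rpow_mul hQ0.le]
    congr 1
    field_simp
  rw [Finset.sum_congr rfl hsum_eq]
  have hx0ge : (1:ℝ) ≤ Q ^ (2*((r:ℝ)-1)*α) := by
    have h0 : Q ^ (0:ℝ) ≤ Q ^ (2*((r:ℝ)-1)*α) :=
      Real.rpow_le_rpow_of_exponent_le hQ1.le (by nlinarith)
    rwa [Real.rpow_zero] at h0
  have hyge : ∀ P ∈ S, Q ^ (2*((r:ℝ)-1)*α) ≤ y P := by
    intro P hP
    obtain ⟨h1, h2⟩ := (hmemS P).mp hP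
    rw [hy_def]
    apply Real.rpow_le_rpow_of_exponent_le hQ1.le
    have hα' : α ≤ ((rCutValue ends P : ℕ):ℝ)/(cr:ℝ) := (le_div_iff₀ hcrR).mpr h2
    have h2r : (0:ℝ) ≤ 2*((r:ℝ)-1) := by linarith
    calc 2*((r:ℝ)-1)*α ≤ 2*((r:ℝ)-1)*(((rCutValue ends P : ℕ):ℝ)/(cr:ℝ)) := by nlinarith
      _ = 2*((r:ℝ)-1)*((rCutValue ends P : ℕ):ℝ)/(cr:ℝ) := by ring
  have hcount : ∀ P ∈ S, ((S.filter (fun P' => y P' ≤ y P)).card : ℝ) ≤ y P := by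
    intro P hP
    obtain ⟨h1, h2⟩ := (hmemS P).mp hP
    have hTcr : cr ≤ rCutValue ends P := by
      have hcc : (cr:ℝ) ≤ ((rCutValue ends P : ℕ):ℝ) := by nlinarith
      exact_mod_cast hcc
    have hsubset : S.filter (fun P' => y P' ≤ y P) ⊆ Finset.univ.filter
        (fun P' : Finset (Finset V) =>
          IsPartitionInto P' r ∧ rCutValue ends P' ≤ rCutValue ends P) := by
      intro P' hP'
      obtain ⟨hP'S, hyle⟩ := Finset.mem_filter.mp hP'
      obtain ⟨h1', _⟩ := (hmemS P').mp hP'S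
      refine Finset.mem_filter.mpr ⟨Finset.mem_univ _, h1', ?_⟩
      rw [hy_def] at hyle
      simp only at hyle
      have hexple := (Real.rpow_le_rpow_left_iff hQ1).mp hyle
      have h2r : (0:ℝ) < 2*((r:ℝ)-1) := by linarith
      have hmul := mul_le_mul_of_nonneg_right hexple hcrR.le
      rw [div_mul_cancel₀ _ hcrR.ne', div_mul_cancel₀ _ hcrR.ne'] at hmul
      have hvv : ((rCutValue ends P' : ℕ):ℝ) ≤ ((rCutValue ends P : ℕ):ℝ) := by nlinarith
      exact_mod_cast hvv
    calc ((S.filter (fun P' => y P' ≤ y P)).card : ℝ)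
        ≤ (((Finset.univ.filter (fun P' : Finset (Finset V) =>
            IsPartitionInto P' r ∧ rCutValue ends P' ≤ rCutValue ends P)).card : ℕ) : ℝ) := by
          exact_mod_cast Finset.card_le_card hsubset
      _ ≤ Q ^ (2*((r:ℝ)-1)*((rCutValue ends P : ℕ):ℝ)/(cr:ℝ)) := by
          rw [hQ_def]
          exact S9.count_main ends hr2 hcr1 hmin hn1 (rCutValue ends P) hTcr
      _ = y P := by rw [hy_def]
  have hrank := S9.sum_rank (δ/2) (Q ^ (2*((r:ℝ)-1)*α)) hθ hx0ge S.card S y rfl hyge hcount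
  apply le_trans hrank
  apply le_trans (S9.GG_le hθ (lt_of_lt_of_le one_pos hx0ge))
  have hx0θ : (Q ^ (2*((r:ℝ)-1)*α)) ^ (-(δ/2)) = Q ^ (-(α*δ*((r:ℝ)-1))) := by
    rw [← Real.rpow_mul hQ0.le]
    congr 1
    ring
  have hdiv : 1 + 1/(δ/2) = 1 + 2/δ := by
    rw [one_div_div]
  rw [hx0θ, hdiv, mul_comm]
end
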